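/- arXiv:2402.03859 — 8 statements merged into one kernel-verified Lean document; each statement's English description precedes it below -/
import Mathlib

section
/- Let ℓ, h0 > 0 and let b : [0,ℓ] → ℝ be smooth with h_b = h0 − b > 0 on [0,ℓ] and min_{[0,ℓ]} (1 + (1/4)(b')² + (1/6) h_b b'') > 0. Then for every u ∈ C²([0,ℓ]) with u'(0) = u'(ℓ) = 0 one has ∫₀^ℓ u·(1 + h_b 𝒯_b)u dx ≥ C‖u‖²_{H¹(0,ℓ)} for some constant C > 0 depending only on b, h0 and ℓ, where (1 + h_b𝒯_b)u = −(1/3)(h_b² u')' − (1/3) h_b b' u' + (1 + (1/3)(b')² + (1/6) h_b b'')u. -/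
open Real MeasureTheory intervalIntegral
open scoped ContDiff

set_option maxHeartbeats 1000000

lemma coercivity_pointwise_aux (α s δ m M C H B1 B2 U U' : ℝ)
    (hα0 : 0 < α) (hα3 : α < 1/3) (h36 : 36 * α * s = 1)
    (hδ : 0 < δ) (hm : 0 < m) (hM : 0 ≤ M) (hMB : 0 < M + 1)
    (hs : s = 1/12 + δ / (2 * (M + 1)))
    (hHm : m ≤ H) (hBM : B1 ^ 2 ≤ M)
    (hgx : δ ≤ 1 + (1/4) * B1 ^ 2 + (1/6) * H * B2)
    (hC1 : C ≤ (1/3 - α) * m ^ 2) (hC2 : C ≤ δ / 2) :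
    C * (U ^ 2 + U' ^ 2) ≤ (1/3) * H ^ 2 * U' ^ 2 - (1/3) * H * B1 * U * U'
      + (1 + (1/3) * B1 ^ 2 + (1/6) * H * B2) * U ^ 2 := by
  have hsval : s = 1 / (36 * α) := by
    rw [eq_div_iff (by positivity)]; linarith [h36]
  have a1 : -((1/3) * H * B1 * U * U') ≥ -(α * H ^ 2 * U' ^ 2 + s * B1 ^ 2 * U ^ 2) := by
    have hkey : α * H ^ 2 * U' ^ 2 + (1 / (36 * α)) * B1 ^ 2 * U ^ 2 - (1/3) * H * B1 * U * U'
        = (6 * α * H * U' - B1 * U) ^ 2 / (36 * α) := by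
      field_simp; ring
    have h0' : 0 ≤ (6 * α * H * U' - B1 * U) ^ 2 / (36 * α) := by positivity
    rw [hsval]; linarith [hkey, h0']
  have a2 : δ / 2 ≤ 1 + (1/3 - s) * B1 ^ 2 + (1/6) * H * B2 := by
    have hτ0 : 0 ≤ δ / (2 * (M + 1)) := by positivity
    have h1 : (δ / (2 * (M + 1))) * B1 ^ 2 ≤ (δ / (2 * (M + 1))) * M :=
      mul_le_mul_of_nonneg_left hBM hτ0
    have hhalf : δ / 2 = (δ / (2 * (M + 1))) * (M + 1) := by
      field_simp
    have h2 : (δ / (2 * (M + 1))) * M ≤ δ / 2 := by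
      rw [hhalf]; nlinarith [hτ0]
    have h3 : 1 + (1/3 - s) * B1 ^ 2 + (1/6) * H * B2
        = (1 + (1/4) * B1 ^ 2 + (1/6) * H * B2) - (δ / (2 * (M + 1))) * B1 ^ 2 := by
      rw [hs]; ring
    rw [h3]; linarith
  have hH2 : m ^ 2 ≤ H ^ 2 := by nlinarith
  have h13 : (0:ℝ) ≤ 1/3 - α := by linarith
  have p1 : (1/3 - α) * m ^ 2 * U' ^ 2 ≤ (1/3 - α) * H ^ 2 * U' ^ 2 :=
    mul_le_mul_of_nonneg_right (mul_le_mul_of_nonneg_left hH2 h13) (sq_nonneg U')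
  have p2 : (δ / 2) * U ^ 2 ≤ (1 + (1/3 - s) * B1 ^ 2 + (1/6) * H * B2) * U ^ 2 :=
    mul_le_mul_of_nonneg_right a2 (sq_nonneg U)
  have q1 : C * U ^ 2 ≤ (δ / 2) * U ^ 2 :=
    mul_le_mul_of_nonneg_right hC2 (sq_nonneg U)
  have q2 : C * U' ^ 2 ≤ (1/3 - α) * m ^ 2 * U' ^ 2 :=
    mul_le_mul_of_nonneg_right hC1 (sq_nonneg U')
  linarith [a1, p1, p2, q1, q2]

theorem coercivity_dispersive_operator
    (ℓ h0 : ℝ) (hℓ : 0 < ℓ) (hh0 : 0 < h0)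
    (b : ℝ → ℝ) (hb_smooth : ContDiff ℝ (⊤ : ℕ∞) b)
    (hb_pos : ∀ x ∈ Set.Icc 0 ℓ, 0 < h0 - b x)
    (hb_cond : ∀ x ∈ Set.Icc 0 ℓ,
      0 < 1 + (1/4) * (deriv b x) ^ 2 + (1/6) * (h0 - b x) * deriv (deriv b) x) :
    ∃ C > 0, ∀ u : ℝ → ℝ, ContDiff ℝ 2 u → deriv u 0 = 0 → deriv u ℓ = 0 →
      (∫ x in (0:ℝ)..ℓ, u x *
        (-(1/3) * deriv (fun y => (h0 - b y) ^ 2 * deriv u y) x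
          - (1/3) * (h0 - b x) * deriv b x * deriv u x
          + (1 + (1/3) * (deriv b x) ^ 2 + (1/6) * (h0 - b x) * deriv (deriv b) x) * u x))
      ≥ C * ∫ x in (0:ℝ)..ℓ, ((u x) ^ 2 + (deriv u x) ^ 2) := by
  have hℓ0 : (0:ℝ) ≤ ℓ := hℓ.le
  -- smoothness / continuity facts about b
  have hb_inf : ContDiff ℝ ∞ b := hb_smooth.of_le (by simp)
  have hb'_inf : ContDiff ℝ ∞ (deriv b) := (contDiff_infty_iff_deriv.mp hb_inf).2
  have hb_c : Continuous b := hb_inf.continuous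
  have hb'_c : Continuous (deriv b) := hb'_inf.continuous
  have hb''_c : Continuous (deriv (deriv b)) :=
    (contDiff_infty_iff_deriv.mp hb'_inf).2.continuous
  have hh_c : Continuous (fun x => h0 - b x) := continuous_const.sub hb_c
  have hh_inf : ContDiff ℝ ∞ (fun x => h0 - b x) := contDiff_const.sub hb_inf
  -- extreme values on [0, ℓ]
  have hK : IsCompact (Set.Icc (0:ℝ) ℓ) := isCompact_Icc
  have hKne : (Set.Icc (0:ℝ) ℓ).Nonempty := ⟨0, by simp [hℓ0]⟩
  have hg_c : Continuous (fun x => 1 + (1/4) * (deriv b x) ^ 2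
      + (1/6) * (h0 - b x) * deriv (deriv b) x) := by fun_prop
  obtain ⟨x0, hx0, hx0min⟩ := hK.exists_isMinOn hKne hg_c.continuousOn
  set δ : ℝ := 1 + (1/4) * (deriv b x0) ^ 2 + (1/6) * (h0 - b x0) * deriv (deriv b) x0 with hδdef
  have hδ : 0 < δ := hb_cond x0 hx0
  obtain ⟨x1, hx1, hx1min⟩ := hK.exists_isMinOn hKne hh_c.continuousOn
  set m : ℝ := h0 - b x1 with hmdef
  have hm : 0 < m := hb_pos x1 hx1
  obtain ⟨x2, hx2, hx2max⟩ := hK.exists_isMaxOn hKne ((hb'_c.pow 2).continuousOn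
    (s := Set.Icc 0 ℓ))
  set M : ℝ := (deriv b x2) ^ 2 with hMdef
  have hM : 0 ≤ M := sq_nonneg _
  -- choice of the Young inequality parameter
  have hMpos : 0 < M + 1 := by linarith
  set s : ℝ := 1/12 + δ / (2 * (M + 1)) with hsdef
  have hspos : 0 < s := by rw [hsdef]; positivity
  have hs12 : 1/12 < s := by
    have h1 : 0 < δ / (2 * (M + 1)) := by positivity
    rw [hsdef]; linarith
  have hsne : s ≠ 0 := ne_of_gt hspos
  set α : ℝ := 1 / (36 * s) with hαdef
  have hα0 : 0 < α := by rw [hαdef]; positivity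
  have hα3 : α < 1/3 := by
    rw [hαdef, div_lt_iff₀ (by positivity)]
    linarith
  have h36αs : 36 * α * s = 1 := by
    rw [hαdef]; field_simp
  set C : ℝ := min ((1/3 - α) * m ^ 2) (δ / 2) with hCdef
  have hC : 0 < C := by
    apply lt_min
    · have h1 : 0 < 1/3 - α := by linarith
      positivity
    · positivity
  refine ⟨C, hC, ?_⟩
  intro u hu hu0 huℓ
  -- regularity of u
  have hu_d : Differentiable ℝ u := hu.differentiable (by norm_num)
  have hu_c : Continuous u := hu.continuous
  have hu' : ContDiff ℝ 1 (deriv u) := by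
    have h2 : ContDiff ℝ ((1:WithTop ℕ∞)+1) u := by norm_num; exact hu
    exact (contDiff_succ_iff_deriv.mp h2).2.2
  have hu'_c : Continuous (deriv u) := hu'.continuous
  set V : ℝ → ℝ := fun y => (h0 - b y) ^ 2 * deriv u y with hVdef
  have hV_cd : ContDiff ℝ 1 V := ((hh_inf.pow 2).of_le (by exact_mod_cast le_top)).mul hu'
  have hV_d : Differentiable ℝ V := hV_cd.differentiable one_ne_zero
  have hV_c : Continuous V := hV_cd.continuous
  have hV'_c : Continuous (deriv V) := hV_cd.continuous_deriv le_rfl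
  -- integration by parts
  have ibp : (∫ x in (0:ℝ)..ℓ, (deriv u x * V x + u x * deriv V x))
      = u ℓ * V ℓ - u 0 * V 0 :=
    integral_deriv_mul_eq_sub (fun x _ => (hu_d x).hasDerivAt)
      (fun x _ => (hV_d x).hasDerivAt)
      (hu'_c.intervalIntegrable _ _) (hV'_c.intervalIntegrable _ _)
  have hV0 : V 0 = 0 := by simp [hVdef, hu0]
  have hVℓ : V ℓ = 0 := by simp [hVdef, huℓ]
  have hint1 : IntervalIntegrable (fun x => deriv u x * V x) volume 0 ℓ :=
    (hu'_c.mul hV_c).intervalIntegrable _ _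
  have hint2 : IntervalIntegrable (fun x => u x * deriv V x) volume 0 ℓ :=
    (hu_c.mul hV'_c).intervalIntegrable _ _
  have ibp2 : (∫ x in (0:ℝ)..ℓ, u x * deriv V x)
      = - ∫ x in (0:ℝ)..ℓ, (h0 - b x) ^ 2 * (deriv u x) ^ 2 := by
    have hsplit := intervalIntegral.integral_add hint1 hint2
    rw [hsplit, hV0, hVℓ] at ibp
    have heq : (∫ x in (0:ℝ)..ℓ, deriv u x * V x)
        = ∫ x in (0:ℝ)..ℓ, (h0 - b x) ^ 2 * (deriv u x) ^ 2 := by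
      apply intervalIntegral.integral_congr
      intro x _
      simp only [hVdef]; ring
    rw [heq] at ibp
    linarith
  -- rewrite the left-hand side as a single integral
  set F : ℝ → ℝ := fun x => (1/3) * (h0 - b x) ^ 2 * (deriv u x) ^ 2
      - (1/3) * (h0 - b x) * deriv b x * u x * deriv u x
      + (1 + (1/3) * (deriv b x) ^ 2 + (1/6) * (h0 - b x) * deriv (deriv b) x) * (u x) ^ 2
    with hFdef
  have hF_c : Continuous F := by
    simp only [hFdef]; fun_prop
  have hrest_c : Continuous (fun x =>
      - (1/3) * (h0 - b x) * deriv b x * u x * deriv u x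
      + (1 + (1/3) * (deriv b x) ^ 2 + (1/6) * (h0 - b x) * deriv (deriv b) x) * (u x) ^ 2) := by
    fun_prop
  have hLHS : (∫ x in (0:ℝ)..ℓ, u x *
        (-(1/3) * deriv (fun y => (h0 - b y) ^ 2 * deriv u y) x
          - (1/3) * (h0 - b x) * deriv b x * deriv u x
          + (1 + (1/3) * (deriv b x) ^ 2 + (1/6) * (h0 - b x) * deriv (deriv b) x) * u x))
      = ∫ x in (0:ℝ)..ℓ, F x := by
    have step1 : (∫ x in (0:ℝ)..ℓ, u x *
        (-(1/3) * deriv (fun y => (h0 - b y) ^ 2 * deriv u y) x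
          - (1/3) * (h0 - b x) * deriv b x * deriv u x
          + (1 + (1/3) * (deriv b x) ^ 2 + (1/6) * (h0 - b x) * deriv (deriv b) x) * u x))
        = ∫ x in (0:ℝ)..ℓ, ((-(1/3)) * (u x * deriv V x)
          + (- (1/3) * (h0 - b x) * deriv b x * u x * deriv u x
            + (1 + (1/3) * (deriv b x) ^ 2 + (1/6) * (h0 - b x) * deriv (deriv b) x)
              * (u x) ^ 2)) := by
      apply intervalIntegral.integral_congr
      intro x _
      simp only [hVdef]; ring
    rw [step1, intervalIntegral.integral_add
      (((show Continuous (fun x => -(1/3:ℝ) * (u x * deriv V x)) from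
        continuous_const.mul (hu_c.mul hV'_c)).intervalIntegrable _ _))
      (hrest_c.intervalIntegrable _ _), intervalIntegral.integral_const_mul, ibp2,
      neg_mul_neg]
    rw [← intervalIntegral.integral_const_mul, ← intervalIntegral.integral_add
      ((show Continuous (fun x => (1/3:ℝ) * ((h0 - b x) ^ 2 * deriv u x ^ 2)) from
        continuous_const.mul ((hh_c.pow 2).mul (hu'_c.pow 2))).intervalIntegrable _ _)
      (hrest_c.intervalIntegrable _ _)]
    apply intervalIntegral.integral_congr
    intro x _
    simp only [hFdef]; ring
  rw [hLHS, ge_iff_le, ← intervalIntegral.integral_const_mul]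
  apply intervalIntegral.integral_mono_on hℓ0
  · exact (continuous_const.mul ((hu_c.pow 2).add (hu'_c.pow 2))).intervalIntegrable _ _
  · exact hF_c.intervalIntegrable _ _
  · -- the pointwise estimate
    intro x hx
    have hHm : m ≤ h0 - b x := hx1min hx
    have hBM : (deriv b x) ^ 2 ≤ M := hx2max hx
    have hgx : δ ≤ 1 + (1/4) * (deriv b x) ^ 2 + (1/6) * (h0 - b x) * deriv (deriv b) x :=
      hx0min hx
    simp only [hFdef]
    exact coercivity_pointwise_aux α s δ m M C (h0 - b x) (deriv b x) (deriv (deriv b) x)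
      (u x) (deriv u x) hα0 hα3 h36αs hδ hm hM hMpos hsdef hHm hBM hgx
      (min_le_left _ _) (min_le_right _ _)
end

section
/- Let ℓ, h0 > 0 and b : [0,ℓ] → ℝ smooth with h_b = h0 − b > 0 and min_{[0,ℓ]}(1 + (1/4)(b')² + (1/6)h_b b'') > 0. If u ∈ C²([0,ℓ]) satisfies (1 + h_b𝒯_b)u = 0 on (0,ℓ) together with u'(0) = u'(ℓ) = 0, then u ≡ 0. -/
open Real Set MeasureTheory
open scoped ContDiff

theorem uniqueness_homogeneous_neumann
    (ℓ h0 : ℝ) (hℓ : 0 < ℓ) (hh0 : 0 < h0)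
    (b : ℝ → ℝ) (hb_smooth : ContDiff ℝ (⊤ : ℕ∞) b)
    (hb_pos : ∀ x ∈ Set.Icc 0 ℓ, 0 < h0 - b x)
    (hb_cond : ∀ x ∈ Set.Icc 0 ℓ,
      0 < 1 + (1/4) * (deriv b x) ^ 2 + (1/6) * (h0 - b x) * deriv (deriv b) x)
    (u : ℝ → ℝ) (hu : ContDiff ℝ 2 u)
    (heq : ∀ x ∈ Set.Ioo 0 ℓ,
      u x + (h0 - b x) *
        (-(1 / (3 * (h0 - b x))) *
            deriv (fun y => (h0 - b y) ^ 3 * deriv (fun z => u z / (h0 - b z)) y) x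
          + (1/2) * deriv (deriv b) x * u x) = 0)
    (hu0 : deriv u 0 = 0) (huℓ : deriv u ℓ = 0) :
    ∀ x ∈ Set.Icc 0 ℓ, u x = 0 := by
  have hbc : Continuous b := hb_smooth.continuous
  have hb_inf : ContDiff ℝ ∞ b := hb_smooth.of_le (by simp)
  have hbd : Differentiable ℝ b := (contDiff_infty_iff_deriv.mp hb_inf).1
  have hb'_inf : ContDiff ℝ ∞ (deriv b) := (contDiff_infty_iff_deriv.mp hb_inf).2
  have hb'd : Differentiable ℝ (deriv b) := (contDiff_infty_iff_deriv.mp hb'_inf).1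
  have hb'c : Continuous (deriv b) := hb'd.continuous
  have hb''c : Continuous (deriv (deriv b)) :=
    ((contDiff_infty_iff_deriv.mp hb'_inf).2).continuous
  have hud : Differentiable ℝ u := hu.differentiable two_ne_zero
  have hu'c : Continuous (deriv u) := hu.continuous_deriv one_le_two
  -- the open set where h0 - b > 0
  set S : Set ℝ := {x | 0 < h0 - b x} with hSdef
  have hSopen : IsOpen S := isOpen_lt continuous_const (continuous_const.sub hbc)
  have hIccS : Set.Icc 0 ℓ ⊆ S := fun x hx => hb_pos x hx
  set v : ℝ → ℝ := fun z => u z / (h0 - b z) with hvdef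
  set w : ℝ → ℝ := fun y => (h0 - b y) ^ 3 * deriv v y with hwdef
  -- derivative of h0 - b
  have hhd : ∀ x : ℝ, HasDerivAt (fun y => h0 - b y) (-(deriv b x)) x := fun x =>
    (hbd x).hasDerivAt.const_sub h0
  -- derivative of v on S
  have hdv : ∀ x ∈ S, HasDerivAt v
      ((deriv u x * (h0 - b x) + u x * deriv b x) / (h0 - b x) ^ 2) x := by
    intro x hx
    have hne : h0 - b x ≠ 0 := ne_of_gt hx
    have h1 := (hud x).hasDerivAt.div (hhd x) hne
    exact h1.congr_deriv (by ring)
  -- v is C^2 on S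
  have hh_cd : ContDiff ℝ 2 (fun y => h0 - b y) :=
    (contDiff_const.sub hb_smooth).of_le (WithTop.coe_le_coe.mpr le_top)
  have hvCD : ContDiffOn ℝ 2 v S :=
    hu.contDiffOn.div hh_cd.contDiffOn (fun x hx => ne_of_gt hx)
  have hv'CD : ContDiffOn ℝ 1 (deriv v) S :=
    hvCD.deriv_of_isOpen hSopen (by norm_num)
  have hv'c : ContinuousOn (deriv v) S := hv'CD.continuousOn
  have hwCD : ContDiffOn ℝ 1 w S :=
    (hh_cd.of_le one_le_two).contDiffOn.pow 3 |>.mul hv'CD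
  have hwdiff : ∀ x ∈ S, DifferentiableAt ℝ w x := fun x hx =>
    ((hwCD.differentiableOn one_ne_zero) x hx).differentiableAt (hSopen.mem_nhds hx)
  have hwc : ContinuousOn w S := hwCD.continuousOn
  -- the equation, rearranged
  have hDw : ∀ x ∈ Set.Ioo 0 ℓ,
      deriv w x = 3 * u x + 3/2 * ((h0 - b x) * deriv (deriv b) x * u x) := by
    intro x hx
    have h1 := heq x hx
    have hne : h0 - b x ≠ 0 := ne_of_gt (hb_pos x (Set.mem_Icc_of_Ioo hx))
    field_simp at h1
    have h2 : (h0 - b x) * deriv w x =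
        (h0 - b x) * (3 * u x + 3/2 * ((h0 - b x) * deriv (deriv b) x * u x)) := by
      linear_combination (-(h0 - b x)/2 : ℝ) * h1
    exact mul_left_cancel₀ hne h2
  set G : ℝ → ℝ := fun x => 1/3 * (w x * v x - (u x) ^ 2 * deriv b x) with hGdef
  set P : ℝ → ℝ := fun x => (u x) ^ 2 / (h0 - b x) *
      (1 + 1/3 * (deriv b x) ^ 2 + 1/6 * (h0 - b x) * deriv (deriv b) x)
      + 1/3 * (h0 - b x) * (deriv u x) ^ 2 with hPdef
  -- G' = P on the open interval
  have hGderiv : ∀ x ∈ Set.Ioo 0 ℓ, HasDerivAt G (P x) x := by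
    intro x hx
    have hxS : x ∈ S := hIccS (Set.mem_Icc_of_Ioo hx)
    have hpos : 0 < h0 - b x := hxS
    have hne : h0 - b x ≠ 0 := ne_of_gt hpos
    have hdvx := hdv x hxS
    have hdvx' : deriv v x = (deriv u x * (h0 - b x) + u x * deriv b x) / (h0 - b x) ^ 2 :=
      hdvx.deriv
    have hdw : HasDerivAt w (deriv w x) x := (hwdiff x hxS).hasDerivAt
    have hdux : HasDerivAt u (deriv u x) x := (hud x).hasDerivAt
    have hdbx : HasDerivAt (deriv b) (deriv (deriv b) x) x := (hb'd x).hasDerivAt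
    have hmain : HasDerivAt G
        (1/3 * ((deriv w x * v x +
            w x * ((deriv u x * (h0 - b x) + u x * deriv b x) / (h0 - b x) ^ 2))
          - ((2 : ℕ) * u x ^ 1 * deriv u x * deriv b x + u x ^ 2 * deriv (deriv b) x))) x :=
      ((hdw.mul hdvx).sub ((hdux.pow 2).mul hdbx)).const_mul (1/3)
    convert hmain using 1
    simp only [hPdef]
    have hwx : w x = (h0 - b x) ^ 3 * deriv v x := rfl
    have hvx : v x = u x / (h0 - b x) := rfl
    rw [hwx, hvx, hdvx', hDw x hx]
    push_cast
    field_simp [hne]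
    ring
  -- continuity facts
  have hhcont : Continuous (fun y => h0 - b y) := continuous_const.sub hbc
  have hvc : ContinuousOn v S :=
    (hud.continuous.continuousOn).div hhcont.continuousOn (fun x hx => ne_of_gt hx)
  have hGcont : ContinuousOn G (Set.Icc 0 ℓ) := by
    apply ContinuousOn.mono _ hIccS
    exact (continuousOn_const.mul ((hwc.mul hvc).sub
      (((hud.continuous.pow 2).continuousOn).mul hb'c.continuousOn)))
  have hPcont : ContinuousOn P (Set.Icc 0 ℓ) := by
    apply ContinuousOn.mono _ hIccS
    apply ContinuousOn.add
    · exact (((hud.continuous.pow 2).continuousOn).div hhcont.continuousOn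
        (fun x hx => ne_of_gt hx)).mul
        ((continuous_const.add (continuous_const.mul (hb'c.pow 2))).add
          ((continuous_const.mul hhcont).mul hb''c)).continuousOn
    · exact ((continuous_const.mul hhcont).mul (hu'c.pow 2)).continuousOn
  have hPint : IntervalIntegrable P volume 0 ℓ := by
    apply ContinuousOn.intervalIntegrable
    rwa [Set.uIcc_of_le hℓ.le]
  -- FTC
  have hFTC : ∫ y in (0:ℝ)..ℓ, P y = G ℓ - G 0 :=
    intervalIntegral.integral_eq_sub_of_hasDeriv_right_of_le hℓ.le hGcont
      (fun x hx => (hGderiv x hx).hasDerivWithinAt) hPint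
  -- boundary values of G vanish
  have hG0 : G 0 = 0 := by
    have h0S : (0:ℝ) ∈ S := hIccS (Set.left_mem_Icc.mpr hℓ.le)
    have hpos : 0 < h0 - b 0 := h0S
    have hne : h0 - b 0 ≠ 0 := ne_of_gt hpos
    have hD := (hdv 0 h0S).deriv
    have hwx : w 0 = (h0 - b 0) ^ 3 * deriv v 0 := rfl
    have hvx : v 0 = u 0 / (h0 - b 0) := rfl
    have : G 0 = 1/3 * (w 0 * v 0 - (u 0) ^ 2 * deriv b 0) := rfl
    rw [this, hwx, hvx, hD, hu0]
    field_simp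
    ring
  have hGl : G ℓ = 0 := by
    have hlS : ℓ ∈ S := hIccS (Set.right_mem_Icc.mpr hℓ.le)
    have hpos : 0 < h0 - b ℓ := hlS
    have hne : h0 - b ℓ ≠ 0 := ne_of_gt hpos
    have hD := (hdv ℓ hlS).deriv
    have hwx : w ℓ = (h0 - b ℓ) ^ 3 * deriv v ℓ := rfl
    have hvx : v ℓ = u ℓ / (h0 - b ℓ) := rfl
    have : G ℓ = 1/3 * (w ℓ * v ℓ - (u ℓ) ^ 2 * deriv b ℓ) := rfl
    rw [this, hwx, hvx, hD, huℓ]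
    field_simp
    ring
  have hint0 : ∫ y in (0:ℝ)..ℓ, P y = 0 := by rw [hFTC, hG0, hGl]; ring
  -- P is nonnegative on [0, ℓ]
  have hCpos : ∀ x ∈ Set.Icc 0 ℓ,
      0 < 1 + 1/3 * (deriv b x) ^ 2 + 1/6 * (h0 - b x) * deriv (deriv b) x := by
    intro x hx
    have h1 := hb_cond x hx
    nlinarith [sq_nonneg (deriv b x)]
  have hPnonneg : ∀ x ∈ Set.Icc 0 ℓ, 0 ≤ P x := by
    intro x hx
    have h1 : 0 < h0 - b x := hb_pos x hx
    have h2 := hCpos x hx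
    have : (0:ℝ) ≤ (u x) ^ 2 / (h0 - b x) := div_nonneg (sq_nonneg _) h1.le
    have : (0:ℝ) ≤ (u x) ^ 2 / (h0 - b x) *
        (1 + 1/3 * (deriv b x) ^ 2 + 1/6 * (h0 - b x) * deriv (deriv b) x) :=
      mul_nonneg this h2.le
    have h3 : (0:ℝ) ≤ 1/3 * (h0 - b x) * (deriv u x) ^ 2 := by positivity
    simp only [hPdef]
    linarith
  -- P vanishes a.e., hence everywhere on (0, ℓ]
  have hae : P =ᵐ[volume.restrict (Set.Ioc 0 ℓ)] 0 := by
    refine (intervalIntegral.integral_eq_zero_iff_of_le_of_nonneg_ae hℓ.le ?_ hPint).mp hint0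
    refine (ae_restrict_iff' measurableSet_Ioc).mpr (ae_of_all _ fun x hx => ?_)
    exact hPnonneg x (Set.Ioc_subset_Icc_self hx)
  have hPzero : Set.EqOn P 0 (Set.Ioc 0 ℓ) := by
    refine Measure.eqOn_of_ae_eq hae (hPcont.mono Set.Ioc_subset_Icc_self)
      continuousOn_const ?_
    rw [interior_Ioc, closure_Ioo hℓ.ne]
    exact Set.Ioc_subset_Icc_self
  -- hence u = 0 on (0, ℓ]
  have huIoc : Set.EqOn u 0 (Set.Ioc 0 ℓ) := by
    intro x hx
    have hxI : x ∈ Set.Icc 0 ℓ := Set.Ioc_subset_Icc_self hx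
    have h1 : 0 < h0 - b x := hb_pos x hxI
    have h2 := hCpos x hxI
    have h3 := hPzero hx
    simp only [hPdef, Pi.zero_apply] at h3
    have hA : (0:ℝ) ≤ (u x) ^ 2 / (h0 - b x) *
        (1 + 1/3 * (deriv b x) ^ 2 + 1/6 * (h0 - b x) * deriv (deriv b) x) :=
      mul_nonneg (div_nonneg (sq_nonneg _) h1.le) h2.le
    have hB : (0:ℝ) ≤ 1/3 * (h0 - b x) * (deriv u x) ^ 2 := by positivity
    have hA0 : (u x) ^ 2 / (h0 - b x) *
        (1 + 1/3 * (deriv b x) ^ 2 + 1/6 * (h0 - b x) * deriv (deriv b) x) = 0 := by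
      linarith
    have hu2 : (u x) ^ 2 / (h0 - b x) = 0 := by
      rcases mul_eq_zero.mp hA0 with h | h
      · exact h
      · exact absurd h h2.ne'
    field_simp at hu2
    simpa using hu2
  -- extend to the closed interval by continuity
  have hclosure : Set.EqOn u 0 (closure (Set.Ioc 0 ℓ)) :=
    huIoc.closure hud.continuous continuous_const
  intro x hx
  have : x ∈ closure (Set.Ioc 0 ℓ) := by rwa [closure_Ioc hℓ.ne]
  exact hclosure this
end

section
/- Let ℓ, h0 > 0 and b smooth with h_b = h0 − b > 0 and min_{[0,ℓ]}(1 + (1/4)(b')² + (1/6)h_b b'') > 0. Let s_b0 and s_bℓ be the solutions of (1 + h_b𝒯_b)u = 0 on (0,ℓ) with boundary data s_b0(0) = 1, s_b0(ℓ) = 0 and s_bℓ(0) = 0, s_bℓ(ℓ) = 1 respectively. Then the matrix S'_b = [[s_b0'(0), s_bℓ'(0)],[s_b0'(ℓ), s_bℓ'(ℓ)]] is invertible, and moreover s_b0'(0) ≠ 0 and s_bℓ'(ℓ) ≠ 0. -/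
open Real Set

lemma topo_deriv_u {u : ℝ → ℝ} (hu : ContDiff ℝ 2 u) :
    Differentiable ℝ u ∧ Differentiable ℝ (deriv u) ∧ Continuous (deriv u) := by
  have h2 : ContDiff ℝ ((1:ℕ) + 1) u := by norm_num at hu ⊢; exact hu
  have h1 := (contDiff_succ_iff_deriv.mp h2).2.2
  exact ⟨hu.differentiable (by norm_num), h1.differentiable (by norm_num), h1.continuous⟩

lemma topo_deriv_b {b : ℝ → ℝ} (hb : ContDiff ℝ (⊤ : ℕ∞) b) :
    Differentiable ℝ b ∧ Differentiable ℝ (deriv b) := by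
  have h2 : ContDiff ℝ ((1:ℕ) + 1) b := hb.of_le (WithTop.coe_le_coe.mpr le_top)
  have h1 := (contDiff_succ_iff_deriv.mp h2).2.2
  exact ⟨hb.differentiable (by simp), h1.differentiable (by norm_num)⟩

/-- The main derivative computation on the region where `h0 - b > 0`. -/
lemma topo_deriv_formula {b u : ℝ → ℝ} (h0 : ℝ) (hb : ContDiff ℝ (⊤ : ℕ∞) b)
    (hu : ContDiff ℝ 2 u) {x : ℝ} (hx : 0 < h0 - b x) :
    deriv (fun y => (h0 - b y) ^ 3 * deriv (fun z => u z / (h0 - b z)) y) x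
      = (h0 - b x) ^ 2 * deriv (deriv u) x - (h0 - b x) * deriv b x * deriv u x
        - (deriv b x) ^ 2 * u x + (h0 - b x) * deriv (deriv b) x * u x := by
  obtain ⟨hud, hud2, _⟩ := topo_deriv_u hu
  obtain ⟨hbd, hbd2⟩ := topo_deriv_b hb
  set U : Set ℝ := {y | 0 < h0 - b y} with hU
  have hUopen : IsOpen U := isOpen_lt continuous_const (continuous_const.sub hbd.continuous)
  have hxU : x ∈ U := hx
  have hbder : ∀ y : ℝ, HasDerivAt (fun z => h0 - b z) (-(deriv b y)) y :=
    fun y => ((hbd y).hasDerivAt).const_sub h0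
  have hEq : EqOn (fun y => (h0 - b y) ^ 3 * deriv (fun z => u z / (h0 - b z)) y)
      (fun y => (h0 - b y) ^ 2 * deriv u y + (h0 - b y) * u y * deriv b y) U := by
    intro y hy
    have hyne : h0 - b y ≠ 0 := ne_of_gt hy
    have hdiv : HasDerivAt (fun z => u z / (h0 - b z))
        ((deriv u y * (h0 - b y) - u y * (-(deriv b y))) / (h0 - b y) ^ 2) y :=
      ((hud y).hasDerivAt).div (hbder y) hyne
    simp only
    rw [hdiv.deriv]
    field_simp
    ring
  have hEv : (fun y => (h0 - b y) ^ 3 * deriv (fun z => u z / (h0 - b z)) y)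
      =ᶠ[nhds x] (fun y => (h0 - b y) ^ 2 * deriv u y + (h0 - b y) * u y * deriv b y) :=
    Filter.eventuallyEq_of_mem (hUopen.mem_nhds hxU) hEq
  rw [hEv.deriv_eq]
  have hg : HasDerivAt (fun y => (h0 - b y) ^ 2 * deriv u y + (h0 - b y) * u y * deriv b y)
      ((2 * (h0 - b x) ^ 1 * (-(deriv b x))) * deriv u x + (h0 - b x) ^ 2 * deriv (deriv u) x
        + (((-(deriv b x)) * u x + (h0 - b x) * deriv u x) * deriv b x
            + (h0 - b x) * u x * deriv (deriv b) x)) x :=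
    (((hbder x).pow 2).mul (hud2 x).hasDerivAt).add
      ((((hbder x).mul (hud x).hasDerivAt)).mul (hbd2 x).hasDerivAt)
  rw [hg.deriv]
  ring

/-- Convert the stated equation into an explicit second-order ODE. -/
lemma topo_ode_convert {b u : ℝ → ℝ} (h0 : ℝ) (hb : ContDiff ℝ (⊤ : ℕ∞) b)
    (hu : ContDiff ℝ 2 u) {x : ℝ} (hx : 0 < h0 - b x)
    (heq : u x + (h0 - b x) *
        (-(1 / (3 * (h0 - b x))) *
            deriv (fun y => (h0 - b y) ^ 3 * deriv (fun z => u z / (h0 - b z)) y) x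
          + (1/2) * deriv (deriv b) x * u x) = 0) :
    (h0 - b x) ^ 2 * deriv (deriv u) x
      = (3 + (deriv b x) ^ 2 + (1/2) * (h0 - b x) * deriv (deriv b) x) * u x
        + (h0 - b x) * deriv b x * deriv u x := by
  rw [topo_deriv_formula h0 hb hu hx] at heq
  have hne : h0 - b x ≠ 0 := ne_of_gt hx
  field_simp at heq
  apply mul_left_cancel₀ hne
  linear_combination (-1/2) * (h0 - b x) * heq

/-- Key uniqueness lemma via the monotone energy `G = (h0-b) u u'`. -/
lemma topo_key (ℓ h0 : ℝ) (hℓ : 0 < ℓ)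
    (b : ℝ → ℝ) (hb_smooth : ContDiff ℝ (⊤ : ℕ∞) b)
    (hb_pos : ∀ x ∈ Set.Icc 0 ℓ, 0 < h0 - b x)
    (hb_cond : ∀ x ∈ Set.Icc 0 ℓ,
      0 < 1 + (1/4) * (deriv b x) ^ 2 + (1/6) * (h0 - b x) * deriv (deriv b) x)
    (u : ℝ → ℝ) (hu : ContDiff ℝ 2 u)
    (hODE : ∀ x ∈ Set.Ioo 0 ℓ, (h0 - b x) ^ 2 * deriv (deriv u) x
      = (3 + (deriv b x) ^ 2 + (1/2) * (h0 - b x) * deriv (deriv b) x) * u x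
        + (h0 - b x) * deriv b x * deriv u x)
    (hG0 : u 0 * deriv u 0 = 0) (hGl : u ℓ * deriv u ℓ = 0) :
    ∀ x ∈ Set.Icc 0 ℓ, u x = 0 := by
  obtain ⟨hud, hud2, hucd⟩ := topo_deriv_u hu
  obtain ⟨hbd, hbd2⟩ := topo_deriv_b hb_smooth
  set G : ℝ → ℝ := fun x => (h0 - b x) * (u x * deriv u x) with hG
  set E : ℝ → ℝ := fun x => (h0 - b x) * (deriv u x) ^ 2
      + ((3 + (deriv b x) ^ 2 + (1/2) * (h0 - b x) * deriv (deriv b) x) * (u x) ^ 2)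
        / (h0 - b x) with hE
  have hGd : ∀ x ∈ Set.Ioo 0 ℓ, HasDerivAt G (E x) x := by
    intro x hx
    have hxI : x ∈ Set.Icc 0 ℓ := Ioo_subset_Icc_self hx
    have hbx : 0 < h0 - b x := hb_pos x hxI
    have h1 : HasDerivAt G ((-(deriv b x)) * (u x * deriv u x)
        + (h0 - b x) * (deriv u x * deriv u x + u x * deriv (deriv u) x)) x :=
      (((hbd x).hasDerivAt.const_sub h0)).mul
        (((hud x).hasDerivAt).mul (hud2 x).hasDerivAt)
    convert h1 using 1
    have hode := hODE x hx
    have h2 : deriv (deriv u) x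
        = ((3 + (deriv b x) ^ 2 + (1/2) * (h0 - b x) * deriv (deriv b) x) * u x
            + (h0 - b x) * deriv b x * deriv u x) / (h0 - b x) ^ 2 := by
      field_simp
      linarith [hode]
    rw [hE, h2]
    field_simp
    ring
  have hEnn : ∀ x ∈ Set.Ioo 0 ℓ, 0 ≤ E x := by
    intro x hx
    have hxI : x ∈ Set.Icc 0 ℓ := Ioo_subset_Icc_self hx
    have hbx : 0 < h0 - b x := hb_pos x hxI
    have hc := hb_cond x hxI
    have hcoef : 0 < 3 + (deriv b x) ^ 2 + (1/2) * (h0 - b x) * deriv (deriv b) x := by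
      nlinarith [sq_nonneg (deriv b x)]
    have : 0 ≤ ((3 + (deriv b x) ^ 2 + (1/2) * (h0 - b x) * deriv (deriv b) x) * (u x) ^ 2)
        / (h0 - b x) := by positivity
    have h2 : 0 ≤ (h0 - b x) * (deriv u x) ^ 2 := by positivity
    simp only [hE]; linarith
  have hGcont : ContinuousOn G (Set.Icc 0 ℓ) :=
    ((continuous_const.sub hbd.continuous).mul
      (hud.continuous.mul hucd)).continuousOn
  have hGmono : MonotoneOn G (Set.Icc 0 ℓ) := by
    apply monotoneOn_of_deriv_nonneg (convex_Icc 0 ℓ) hGcont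
    · intro x hx
      rw [interior_Icc] at hx
      exact ((hGd x hx).differentiableAt).differentiableWithinAt
    · intro x hx
      rw [interior_Icc] at hx
      rw [(hGd x hx).deriv]
      exact hEnn x hx
  have hG0' : G 0 = 0 := by simp [hG, hG0]
  have hGl' : G ℓ = 0 := by simp [hG, hGl]
  have hGzero : ∀ x ∈ Set.Icc 0 ℓ, G x = 0 := by
    intro x hx
    have h1 : G 0 ≤ G x := hGmono (left_mem_Icc.mpr hℓ.le) hx hx.1
    have h2 : G x ≤ G ℓ := hGmono hx (right_mem_Icc.mpr hℓ.le) hx.2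
    rw [hG0'] at h1; rw [hGl'] at h2; linarith
  have huIoo : ∀ x ∈ Set.Ioo 0 ℓ, u x = 0 := by
    intro x hx
    have hEv : G =ᶠ[nhds x] (fun _ => (0:ℝ)) :=
      Filter.eventuallyEq_of_mem (isOpen_Ioo.mem_nhds hx)
        (fun y hy => hGzero y (Ioo_subset_Icc_self hy))
    have hd0 : deriv G x = 0 := by rw [hEv.deriv_eq]; simp
    have hEx : E x = 0 := by rw [← (hGd x hx).deriv, hd0]
    have hxI : x ∈ Set.Icc 0 ℓ := Ioo_subset_Icc_self hx
    have hbx : 0 < h0 - b x := hb_pos x hxI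
    have hc := hb_cond x hxI
    have hcoef : 0 < 3 + (deriv b x) ^ 2 + (1/2) * (h0 - b x) * deriv (deriv b) x := by
      nlinarith [sq_nonneg (deriv b x)]
    have h2 : 0 ≤ (h0 - b x) * (deriv u x) ^ 2 := by positivity
    have h3 : ((3 + (deriv b x) ^ 2 + (1/2) * (h0 - b x) * deriv (deriv b) x) * (u x) ^ 2)
        / (h0 - b x) ≤ 0 := by
      simp only [hE] at hEx; linarith
    have h4 : (3 + (deriv b x) ^ 2 + (1/2) * (h0 - b x) * deriv (deriv b) x) * (u x) ^ 2 ≤ 0 := by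
      by_contra hcon
      push_neg at hcon
      have := div_pos hcon hbx
      linarith
    have h5 : (3 + (deriv b x) ^ 2 + (1/2) * (h0 - b x) * deriv (deriv b) x) * (u x) ^ 2 = 0 :=
      le_antisymm h4 (mul_nonneg hcoef.le (sq_nonneg _))
    have h6 : (u x) ^ 2 = 0 := (mul_eq_zero.mp h5).resolve_left hcoef.ne'
    exact pow_eq_zero_iff two_ne_zero |>.mp h6
  have hclo : EqOn u (fun _ => (0:ℝ)) (closure (Set.Ioo 0 ℓ)) :=
    Set.EqOn.closure (fun y hy => huIoo y hy) hud.continuous continuous_const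
  rw [closure_Ioo hℓ.ne] at hclo
  exact fun x hx => hclo hx

theorem topography_boundary_matrix_invertible
    (ℓ h0 : ℝ) (hℓ : 0 < ℓ) (hh0 : 0 < h0)
    (b : ℝ → ℝ) (hb_smooth : ContDiff ℝ (⊤ : ℕ∞) b)
    (hb_pos : ∀ x ∈ Set.Icc 0 ℓ, 0 < h0 - b x)
    (hb_cond : ∀ x ∈ Set.Icc 0 ℓ,
      0 < 1 + (1/4) * (deriv b x) ^ 2 + (1/6) * (h0 - b x) * deriv (deriv b) x)
    (sb0 sbl : ℝ → ℝ) (hsb0_smooth : ContDiff ℝ 2 sb0) (hsbl_smooth : ContDiff ℝ 2 sbl)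
    (heq0 : ∀ x ∈ Set.Ioo 0 ℓ,
      sb0 x + (h0 - b x) *
        (-(1 / (3 * (h0 - b x))) *
            deriv (fun y => (h0 - b y) ^ 3 * deriv (fun z => sb0 z / (h0 - b z)) y) x
          + (1/2) * deriv (deriv b) x * sb0 x) = 0)
    (heql : ∀ x ∈ Set.Ioo 0 ℓ,
      sbl x + (h0 - b x) *
        (-(1 / (3 * (h0 - b x))) *
            deriv (fun y => (h0 - b y) ^ 3 * deriv (fun z => sbl z / (h0 - b z)) y) x
          + (1/2) * deriv (deriv b) x * sbl x) = 0)
    (hbc0 : sb0 0 = 1) (hbc0' : sb0 ℓ = 0)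
    (hbcl : sbl 0 = 0) (hbcl' : sbl ℓ = 1) :
    Matrix.det !![deriv sb0 0, deriv sbl 0; deriv sb0 ℓ, deriv sbl ℓ] ≠ 0 ∧
    deriv sb0 0 ≠ 0 ∧ deriv sbl ℓ ≠ 0 := by
  have hODE0 : ∀ x ∈ Set.Ioo 0 ℓ, (h0 - b x) ^ 2 * deriv (deriv sb0) x
      = (3 + (deriv b x) ^ 2 + (1/2) * (h0 - b x) * deriv (deriv b) x) * sb0 x
        + (h0 - b x) * deriv b x * deriv sb0 x :=
    fun x hx => topo_ode_convert h0 hb_smooth hsb0_smooth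
      (hb_pos x (Ioo_subset_Icc_self hx)) (heq0 x hx)
  have hODEl : ∀ x ∈ Set.Ioo 0 ℓ, (h0 - b x) ^ 2 * deriv (deriv sbl) x
      = (3 + (deriv b x) ^ 2 + (1/2) * (h0 - b x) * deriv (deriv b) x) * sbl x
        + (h0 - b x) * deriv b x * deriv sbl x :=
    fun x hx => topo_ode_convert h0 hb_smooth hsbl_smooth
      (hb_pos x (Ioo_subset_Icc_self hx)) (heql x hx)
  have h0mem : (0:ℝ) ∈ Set.Icc 0 ℓ := left_mem_Icc.mpr hℓ.le
  -- claim 2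
  have c2 : deriv sb0 0 ≠ 0 := by
    intro h
    have := topo_key ℓ h0 hℓ b hb_smooth hb_pos hb_cond sb0 hsb0_smooth hODE0
      (by rw [h]; ring) (by rw [hbc0']; ring) 0 h0mem
    rw [hbc0] at this; norm_num at this
  -- claim 3
  have c3 : deriv sbl ℓ ≠ 0 := by
    intro h
    have := topo_key ℓ h0 hℓ b hb_smooth hb_pos hb_cond sbl hsbl_smooth hODEl
      (by rw [hbcl]; ring) (by rw [h]; ring) ℓ (right_mem_Icc.mpr hℓ.le)
    rw [hbcl'] at this; norm_num at this
  -- claim 1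
  have c1 : Matrix.det !![deriv sb0 0, deriv sbl 0; deriv sb0 ℓ, deriv sbl ℓ] ≠ 0 := by
    rw [Matrix.det_fin_two_of]
    intro hdet
    obtain ⟨hs0d, hs0d2, _⟩ := topo_deriv_u hsb0_smooth
    obtain ⟨hsld, hsld2, _⟩ := topo_deriv_u hsbl_smooth
    set u : ℝ → ℝ := fun x => deriv sbl ℓ * sb0 x - deriv sb0 ℓ * sbl x with hu_def
    have hu : ContDiff ℝ 2 u :=
      (contDiff_const.mul hsb0_smooth).sub (contDiff_const.mul hsbl_smooth)
    have hu' : deriv u = fun x => deriv sbl ℓ * deriv sb0 x - deriv sb0 ℓ * deriv sbl x :=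
      funext fun x =>
        (((hs0d x).hasDerivAt.const_mul (deriv sbl ℓ)).sub
          ((hsld x).hasDerivAt.const_mul (deriv sb0 ℓ))).deriv
    have hu'' : ∀ x, deriv (deriv u) x
        = deriv sbl ℓ * deriv (deriv sb0) x - deriv sb0 ℓ * deriv (deriv sbl) x := by
      intro x
      rw [hu']
      exact (((hs0d2 x).hasDerivAt.const_mul (deriv sbl ℓ)).sub
        ((hsld2 x).hasDerivAt.const_mul (deriv sb0 ℓ))).deriv
    have hODEu : ∀ x ∈ Set.Ioo 0 ℓ, (h0 - b x) ^ 2 * deriv (deriv u) x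
        = (3 + (deriv b x) ^ 2 + (1/2) * (h0 - b x) * deriv (deriv b) x) * u x
          + (h0 - b x) * deriv b x * deriv u x := by
      intro x hx
      rw [hu'', hu_def]
      simp only
      rw [hu']
      linear_combination deriv sbl ℓ * (hODE0 x hx) - deriv sb0 ℓ * (hODEl x hx)
    have hG0 : u 0 * deriv u 0 = 0 := by
      rw [hu']
      have : deriv sbl ℓ * deriv sb0 0 - deriv sb0 ℓ * deriv sbl 0 = 0 := by
        linear_combination hdet
      simp only [this, mul_zero]
    have hGl : u ℓ * deriv u ℓ = 0 := by
      rw [hu']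
      have : deriv sbl ℓ * deriv sb0 ℓ - deriv sb0 ℓ * deriv sbl ℓ = 0 := by ring
      simp only [this, mul_zero]
    have hzero := topo_key ℓ h0 hℓ b hb_smooth hb_pos hb_cond u hu hODEu hG0 hGl 0 h0mem
    rw [hu_def] at hzero
    simp only [hbc0, hbcl, mul_one, mul_zero, sub_zero] at hzero
    exact c3 hzero
  exact ⟨c1, c2, c3⟩
end

section
/- Let ℓ, h0 > 0 and b : [0,ℓ] → ℝ smooth with h_b = h0 − b. Define the first-order operator S(u) = −(1/√3) h_b ∂x(u/h_b) + (√3/2)(b'/h_b) u and its formal adjoint S*(f) = (1/√3)(1/h_b)∂x(h_b f) + (√3/2)(b'/h_b) f. Then for every smooth u on [0,ℓ], one has S*(h_b S(u)) + (1/4)((b')²/h_b) u = −(1/(3h_b))∂x(h_b³ ∂x(u/h_b)) + (1/2) b'' u, i.e. 𝒯_b(u) = S*(h_b S(u)) + (1/4)((b')²/h_b)u. -/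
set_option maxHeartbeats 1000000


open Real

theorem Tb_factorization_with_remainder
    (ℓ h0 : ℝ) (hℓ : 0 < ℓ) (hh0 : 0 < h0)
    (b : ℝ → ℝ) (hb_smooth : ContDiff ℝ (⊤ : ℕ∞) b)
    (hb_pos : ∀ x ∈ Set.Icc 0 ℓ, 0 < h0 - b x)
    (u : ℝ → ℝ) (hu : ContDiff ℝ (⊤ : ℕ∞) u)
    (S : (ℝ → ℝ) → ℝ → ℝ)
    (hS : ∀ v x, S v x = -(1 / Real.sqrt 3) * (h0 - b x) * deriv (fun z => v z / (h0 - b z)) x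
        + (Real.sqrt 3 / 2) * (deriv b x / (h0 - b x)) * v x)
    (Sstar : (ℝ → ℝ) → ℝ → ℝ)
    (hSstar : ∀ f x, Sstar f x = (1 / Real.sqrt 3) * (1 / (h0 - b x)) *
        deriv (fun y => (h0 - b y) * f y) x
        + (Real.sqrt 3 / 2) * (deriv b x / (h0 - b x)) * f x) :
    ∀ x ∈ Set.Icc 0 ℓ,
      Sstar (fun y => (h0 - b y) * S u y) x + (1/4) * ((deriv b x) ^ 2 / (h0 - b x)) * u x
        = -(1 / (3 * (h0 - b x))) *
            deriv (fun y => (h0 - b y) ^ 3 * deriv (fun z => u z / (h0 - b z)) y) x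
          + (1/2) * deriv (deriv b) x * u x := by
  intro x hx
  have hbd : Differentiable ℝ b := hb_smooth.differentiable (by simp)
  have hbd' : Differentiable ℝ (deriv b) :=
    ((hb_smooth.of_le (by simp)).iterate_deriv 1).differentiable (by simp)
  have hud : Differentiable ℝ u := hu.differentiable (by simp)
  have hud' : Differentiable ℝ (deriv u) :=
    ((hu.of_le (by simp)).iterate_deriv 1).differentiable (by simp)
  have hxpos : 0 < h0 - b x := hb_pos x hx
  have hne : (h0 - b x) ≠ 0 := ne_of_gt hxpos
  have hs : Real.sqrt 3 * Real.sqrt 3 = 3 := Real.mul_self_sqrt (by norm_num)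
  have hsne : Real.sqrt 3 ≠ 0 := by positivity
  have hcont : Continuous fun y => h0 - b y := continuous_const.sub hbd.continuous
  have hU : ∀ᶠ y in nhds x, 0 < h0 - b y :=
    hcont.continuousAt.eventually (eventually_gt_nhds hxpos)
  -- derivative of u / h
  have hw' : ∀ᶠ y in nhds x, deriv (fun z => u z / (h0 - b z)) y
      = (deriv u y * (h0 - b y) + u y * deriv b y) / (h0 - b y)^2 := by
    filter_upwards [hU] with y hy
    have hney : (h0 - b y) ≠ 0 := ne_of_gt hy
    rw [deriv_fun_div (hud y) (by fun_prop : DifferentiableAt ℝ (fun z => h0 - b z) y) hney]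
    rw [deriv_const_sub]
    ring
  -- h * S u simplified
  have hF : ∀ᶠ y in nhds x, (h0 - b y) * S u y
      = -(1 / Real.sqrt 3) * (deriv u y * (h0 - b y) + u y * deriv b y)
        + (Real.sqrt 3 / 2) * (deriv b y * u y) := by
    filter_upwards [hU, hw'] with y hy hwy
    have hney : (h0 - b y) ≠ 0 := ne_of_gt hy
    rw [hS, hwy]
    field_simp
  -- h^3 * w' simplified
  have hK : ∀ᶠ y in nhds x, (h0 - b y) ^ 3 * deriv (fun z => u z / (h0 - b z)) y
      = (deriv u y * (h0 - b y) + u y * deriv b y) * (h0 - b y) := by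
    filter_upwards [hU, hw'] with y hy hwy
    have hney : (h0 - b y) ≠ 0 := ne_of_gt hy
    rw [hwy]
    field_simp
  -- pointwise HasDerivAt facts
  have hb_x : HasDerivAt b (deriv b x) x := (hbd x).hasDerivAt
  have hb'_x : HasDerivAt (deriv b) (deriv (deriv b) x) x := (hbd' x).hasDerivAt
  have hu_x : HasDerivAt u (deriv u x) x := (hud x).hasDerivAt
  have hu'_x : HasDerivAt (deriv u) (deriv (deriv u) x) x := (hud' x).hasDerivAt
  have hh_x : HasDerivAt (fun y => h0 - b y) (-(deriv b x)) x := hb_x.const_sub h0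
  have hA : HasDerivAt (fun y => deriv u y * (h0 - b y) + u y * deriv b y)
      ((deriv (deriv u) x * (h0 - b x) + deriv u x * -(deriv b x))
        + (deriv u x * deriv b x + u x * deriv (deriv b) x)) x :=
    (hu'_x.mul hh_x).add (hu_x.mul hb'_x)
  have hKder : HasDerivAt
      (fun y => (deriv u y * (h0 - b y) + u y * deriv b y) * (h0 - b y))
      (((deriv (deriv u) x * (h0 - b x) + deriv u x * -(deriv b x))
        + (deriv u x * deriv b x + u x * deriv (deriv b) x)) * (h0 - b x)
        + (deriv u x * (h0 - b x) + u x * deriv b x) * -(deriv b x)) x := hA.mul hh_x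
  have hFder : HasDerivAt
      (fun y => -(1 / Real.sqrt 3) * (deriv u y * (h0 - b y) + u y * deriv b y)
        + (Real.sqrt 3 / 2) * (deriv b y * u y))
      (-(1 / Real.sqrt 3) * ((deriv (deriv u) x * (h0 - b x) + deriv u x * -(deriv b x))
        + (deriv u x * deriv b x + u x * deriv (deriv b) x))
        + (Real.sqrt 3 / 2) * (deriv (deriv b) x * u x + deriv b x * deriv u x)) x :=
    (hA.const_mul _).add ((hb'_x.mul hu_x).const_mul _)
  have hGder : HasDerivAt
      (fun y => (h0 - b y) * (-(1 / Real.sqrt 3) * (deriv u y * (h0 - b y) + u y * deriv b y)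
        + (Real.sqrt 3 / 2) * (deriv b y * u y)))
      (-(deriv b x) * (-(1 / Real.sqrt 3) * (deriv u x * (h0 - b x) + u x * deriv b x)
        + (Real.sqrt 3 / 2) * (deriv b x * u x))
        + (h0 - b x) * (-(1 / Real.sqrt 3) * ((deriv (deriv u) x * (h0 - b x) + deriv u x * -(deriv b x))
          + (deriv u x * deriv b x + u x * deriv (deriv b) x))
          + (Real.sqrt 3 / 2) * (deriv (deriv b) x * u x + deriv b x * deriv u x))) x :=
    hh_x.mul hFder
  -- rewrite derivatives in the goal
  have e1 : deriv (fun y => (h0 - b y) * ((h0 - b y) * S u y)) x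
      = -(deriv b x) * (-(1 / Real.sqrt 3) * (deriv u x * (h0 - b x) + u x * deriv b x)
        + (Real.sqrt 3 / 2) * (deriv b x * u x))
        + (h0 - b x) * (-(1 / Real.sqrt 3) * ((deriv (deriv u) x * (h0 - b x) + deriv u x * -(deriv b x))
          + (deriv u x * deriv b x + u x * deriv (deriv b) x))
          + (Real.sqrt 3 / 2) * (deriv (deriv b) x * u x + deriv b x * deriv u x)) := by
    have heq : (fun y => (h0 - b y) * ((h0 - b y) * S u y))
        =ᶠ[nhds x] (fun y => (h0 - b y) * (-(1 / Real.sqrt 3) * (deriv u y * (h0 - b y) + u y * deriv b y)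
          + (Real.sqrt 3 / 2) * (deriv b y * u y))) := by
      filter_upwards [hF] with y hy
      rw [hy]
    rw [heq.deriv_eq]
    exact hGder.deriv
  have e2 : deriv (fun y => (h0 - b y) ^ 3 * deriv (fun z => u z / (h0 - b z)) y) x
      = ((deriv (deriv u) x * (h0 - b x) + deriv u x * -(deriv b x))
        + (deriv u x * deriv b x + u x * deriv (deriv b) x)) * (h0 - b x)
        + (deriv u x * (h0 - b x) + u x * deriv b x) * -(deriv b x) := by
    have heq : (fun y => (h0 - b y) ^ 3 * deriv (fun z => u z / (h0 - b z)) y)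
        =ᶠ[nhds x] (fun y => (deriv u y * (h0 - b y) + u y * deriv b y) * (h0 - b y)) :=
      hK
    rw [heq.deriv_eq]
    exact hKder.deriv
  have e3 : (h0 - b x) * S u x
      = -(1 / Real.sqrt 3) * (deriv u x * (h0 - b x) + u x * deriv b x)
        + (Real.sqrt 3 / 2) * (deriv b x * u x) := hF.self_of_nhds
  rw [hSstar, e1, e2, e3]
  have h2 : Real.sqrt 3 ^ 2 = 3 := Real.sq_sqrt (by norm_num)
  have h4 : Real.sqrt 3 ^ 4 = 9 := by
    rw [show (4:ℕ) = 2*2 from rfl, pow_mul, h2]; norm_num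
  have h6 : Real.sqrt 3 ^ 6 = 27 := by
    rw [show (6:ℕ) = 2*3 from rfl, pow_mul, h2]; norm_num
  field_simp
  ring_nf
  simp only [h2, h4, h6]
  ring
end

section
/- Let ℓ, h0 > 0 and b smooth on [0,ℓ] with h_b = h0 − b > 0, and set α_b = 1 + (1/4)(b')². With S(u) = −(1/√3) h_b ∂x(u/h_b) + (√3/2)(b'/h_b)u and S*(f) = (1/√3)(1/h_b)∂x(h_b f) + (√3/2)(b'/h_b)f, one has the operator identity (1 + h_b𝒯_b)u = α_b u + h_b S*(h_b S(u)) for all smooth u on [0,ℓ]. -/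
open Real

theorem one_plus_hbTb_factorization
    (ℓ h0 : ℝ) (hℓ : 0 < ℓ) (hh0 : 0 < h0)
    (b : ℝ → ℝ) (hb_smooth : ContDiff ℝ (⊤ : ℕ∞) b)
    (hb_pos : ∀ x ∈ Set.Icc 0 ℓ, 0 < h0 - b x)
    (u : ℝ → ℝ) (hu : ContDiff ℝ (⊤ : ℕ∞) u)
    (S : (ℝ → ℝ) → ℝ → ℝ)
    (hS : ∀ v x, S v x = -(1 / Real.sqrt 3) * (h0 - b x) * deriv (fun z => v z / (h0 - b z)) x
        + (Real.sqrt 3 / 2) * (deriv b x / (h0 - b x)) * v x)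
    (Sstar : (ℝ → ℝ) → ℝ → ℝ)
    (hSstar : ∀ f x, Sstar f x = (1 / Real.sqrt 3) * (1 / (h0 - b x)) *
        deriv (fun y => (h0 - b y) * f y) x
        + (Real.sqrt 3 / 2) * (deriv b x / (h0 - b x)) * f x) :
    ∀ x ∈ Set.Icc 0 ℓ,
      u x + (h0 - b x) *
        (-(1 / (3 * (h0 - b x))) *
            deriv (fun y => (h0 - b y) ^ 3 * deriv (fun z => u z / (h0 - b z)) y) x
          + (1/2) * deriv (deriv b) x * u x)
      = (1 + (1/4) * (deriv b x) ^ 2) * u x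
          + (h0 - b x) * Sstar (fun y => (h0 - b y) * S u y) x := by
  intro x hx
  have hbx : 0 < h0 - b x := hb_pos x hx
  have hbx' : h0 - b x ≠ 0 := ne_of_gt hbx
  have hbI : ContDiff ℝ (⊤ : ℕ∞) b := hb_smooth.of_le (by simp)
  have huI : ContDiff ℝ (⊤ : ℕ∞) u := hu.of_le (by simp)
  have hbC : ContDiff ℝ (⊤ : ℕ∞) (deriv b) := (contDiff_infty_iff_deriv.mp hbI).2
  have huC : ContDiff ℝ (⊤ : ℕ∞) (deriv u) := (contDiff_infty_iff_deriv.mp huI).2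
  have hbd : ∀ y, HasDerivAt b (deriv b y) y :=
    fun y => (hbI.differentiable (by simp) y).hasDerivAt
  have hbd2 : HasDerivAt (deriv b) (deriv (deriv b) x) x :=
    (hbC.differentiable (by simp) x).hasDerivAt
  have hud : ∀ y, HasDerivAt u (deriv u y) y :=
    fun y => (huI.differentiable (by simp) y).hasDerivAt
  have hud2 : HasDerivAt (deriv u) (deriv (deriv u) x) x :=
    (huC.differentiable (by simp) x).hasDerivAt
  have hhd : ∀ y, HasDerivAt (fun z => h0 - b z) (-(deriv b y)) y := by
    intro y
    exact (hbd y).const_sub h0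
  have hnb : ∀ᶠ y in nhds x, 0 < h0 - b y := by
    have ho : IsOpen {y : ℝ | 0 < h0 - b y} :=
      isOpen_lt continuous_const (continuous_const.sub hb_smooth.continuous)
    exact ho.mem_nhds hbx
  have hw : ∀ᶠ y in nhds x, deriv (fun z => u z / (h0 - b z)) y
      = (deriv u y * (h0 - b y) + u y * deriv b y) / (h0 - b y) ^ 2 := by
    filter_upwards [hnb] with y hy
    have hq : HasDerivAt (fun z => u z / (h0 - b z))
        ((deriv u y * (h0 - b y) - u y * (-(deriv b y))) / (h0 - b y) ^ 2) y :=
      (hud y).div (hhd y) (ne_of_gt hy)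
    rw [hq.deriv]; ring
  have hwx : deriv (fun z => u z / (h0 - b z)) x
      = (deriv u x * (h0 - b x) + u x * deriv b x) / (h0 - b x) ^ 2 := hw.self_of_nhds
  have hInner : HasDerivAt (fun y => deriv u y * (h0 - b y) + u y * deriv b y)
      (deriv (deriv u) x * (h0 - b x) + deriv u x * (-(deriv b x))
        + (deriv u x * deriv b x + u x * deriv (deriv b) x)) x :=
    (hud2.mul (hhd x)).add ((hud x).mul hbd2)
  -- LHS
  have hLeq : (fun y => (h0 - b y) ^ 3 * deriv (fun z => u z / (h0 - b z)) y)
      =ᶠ[nhds x] fun y => (h0 - b y) * (deriv u y * (h0 - b y) + u y * deriv b y) := by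
    filter_upwards [hnb, hw] with y hy hwy
    rw [hwy]
    field_simp
  have hP : HasDerivAt (fun y => (h0 - b y) * (deriv u y * (h0 - b y) + u y * deriv b y))
      (-(deriv b x) * (deriv u x * (h0 - b x) + u x * deriv b x)
        + (h0 - b x) * (deriv (deriv u) x * (h0 - b x) + deriv u x * (-(deriv b x))
          + (deriv u x * deriv b x + u x * deriv (deriv b) x))) x :=
    (hhd x).mul hInner
  have hLd : deriv (fun y => (h0 - b y) ^ 3 * deriv (fun z => u z / (h0 - b z)) y) x
      = -(deriv b x) * (deriv u x * (h0 - b x) + u x * deriv b x)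
        + (h0 - b x) * (deriv (deriv u) x * (h0 - b x) + deriv u x * (-(deriv b x))
          + (deriv u x * deriv b x + u x * deriv (deriv b) x)) := by
    rw [hLeq.deriv_eq, hP.deriv]
  -- RHS
  rw [hSstar]
  have hQeq : (fun y => (h0 - b y) * ((fun y => (h0 - b y) * S u y) y))
      =ᶠ[nhds x] fun y => (h0 - b y) *
        (-(1 / Real.sqrt 3) * (deriv u y * (h0 - b y) + u y * deriv b y)
          + Real.sqrt 3 / 2 * (deriv b y * u y)) := by
    have h3 : Real.sqrt 3 ≠ 0 := by positivity
    filter_upwards [hnb, hw] with y hy hwy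
    simp only [hS, hwy]
    field_simp
  have hQ : HasDerivAt (fun y => (h0 - b y) *
        (-(1 / Real.sqrt 3) * (deriv u y * (h0 - b y) + u y * deriv b y)
          + Real.sqrt 3 / 2 * (deriv b y * u y)))
      (-(deriv b x) * (-(1 / Real.sqrt 3) * (deriv u x * (h0 - b x) + u x * deriv b x)
          + Real.sqrt 3 / 2 * (deriv b x * u x))
        + (h0 - b x) * (-(1 / Real.sqrt 3) * (deriv (deriv u) x * (h0 - b x)
            + deriv u x * (-(deriv b x)) + (deriv u x * deriv b x + u x * deriv (deriv b) x))
          + Real.sqrt 3 / 2 * (deriv (deriv b) x * u x + deriv b x * deriv u x))) x :=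
    (hhd x).mul ((hInner.const_mul _).add ((hbd2.mul (hud x)).const_mul _))
  have hQd : deriv (fun y => (h0 - b y) * ((fun y => (h0 - b y) * S u y) y)) x
      = -(deriv b x) * (-(1 / Real.sqrt 3) * (deriv u x * (h0 - b x) + u x * deriv b x)
          + Real.sqrt 3 / 2 * (deriv b x * u x))
        + (h0 - b x) * (-(1 / Real.sqrt 3) * (deriv (deriv u) x * (h0 - b x)
            + deriv u x * (-(deriv b x)) + (deriv u x * deriv b x + u x * deriv (deriv b) x))
          + Real.sqrt 3 / 2 * (deriv (deriv b) x * u x + deriv b x * deriv u x)) := by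
    rw [hQeq.deriv_eq, hQ.deriv]
  rw [hLd, hQd, hS, hwx]
  have h3 : Real.sqrt 3 * Real.sqrt 3 = 3 := Real.mul_self_sqrt (by norm_num)
  have h3' : Real.sqrt 3 ≠ 0 := by positivity
  have hsq : Real.sqrt 3 ^ 2 = 3 := Real.sq_sqrt (by norm_num)
  have h4 : Real.sqrt 3 ^ 4 = 9 := by
    rw [show (4:ℕ) = 2*2 from rfl, pow_mul, hsq]; norm_num
  have h6 : Real.sqrt 3 ^ 6 = 27 := by
    rw [show (6:ℕ) = 2*3 from rfl, pow_mul, hsq]; norm_num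
  field_simp
  ring_nf
  simp only [h4, hsq, h6]
  ring
end

section
/- Let ℓ, h0 > 0 and b smooth with h_b = h0 − b > 0, α_b = 1 + (1/4)(b')². Let f̃ be smooth on [0,ℓ] and let v be smooth satisfying v + (1/h_b)(h_bS)((h_b/α_b)(h_bS)*(v)) = f̃ on (0,ℓ) with (h_bS)*(v)(0) = (h_bS)*(v)(ℓ) = 0. Then √3 · d/dx[(h_b/α_b)(h_bS)*(v)] evaluated at x = 0 and at x = ℓ equals −3(f̃ − v) at x = 0 and x = ℓ respectively. -/
open Real
open scoped ContDiff

theorem trace_relation_Rb1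
    (ℓ h0 : ℝ) (hℓ : 0 < ℓ) (hh0 : 0 < h0)
    (b : ℝ → ℝ) (hb_smooth : ContDiff ℝ (⊤ : ℕ∞) b)
    (hb_pos : ∀ x ∈ Set.Icc 0 ℓ, 0 < h0 - b x)
    (hbS : (ℝ → ℝ) → ℝ → ℝ)
    (hhbS : ∀ v x, hbS v x = -((h0 - b x) ^ 2 / Real.sqrt 3) * deriv (fun z => v z / (h0 - b z)) x
        + (Real.sqrt 3 / 2) * deriv b x * v x)
    (hbSstar : (ℝ → ℝ) → ℝ → ℝ)
    (hhbSstar : ∀ g x, hbSstar g x = (1 / Real.sqrt 3) * (1 / (h0 - b x)) *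
        deriv (fun y => (h0 - b y) ^ 2 * g y) x + (Real.sqrt 3 / 2) * deriv b x * g x)
    (ftilde v : ℝ → ℝ) (hftilde : ContDiff ℝ (⊤ : ℕ∞) ftilde) (hv : ContDiff ℝ (⊤ : ℕ∞) v)
    (heq : ∀ x ∈ Set.Ioo 0 ℓ,
      v x + (1 / (h0 - b x)) *
        hbS (fun y => (h0 - b y) / (1 + (1/4) * (deriv b y) ^ 2) * hbSstar v y) x
      = ftilde x)
    (hbc0 : hbSstar v 0 = 0) (hbcl : hbSstar v ℓ = 0) :
    Real.sqrt 3 *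
        deriv (fun y => (h0 - b y) / (1 + (1/4) * (deriv b y) ^ 2) * hbSstar v y) 0
      = -3 * (ftilde 0 - v 0) ∧
    Real.sqrt 3 *
        deriv (fun y => (h0 - b y) / (1 + (1/4) * (deriv b y) ^ 2) * hbSstar v y) ℓ
      = -3 * (ftilde ℓ - v ℓ) := by
  have hs3 : (0:ℝ) < Real.sqrt 3 := Real.sqrt_pos.mpr (by norm_num)
  have hs3' : Real.sqrt 3 ≠ 0 := ne_of_gt hs3
  have hs3sq : Real.sqrt 3 * Real.sqrt 3 = 3 := Real.mul_self_sqrt (by norm_num)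
  -- basic smooth functions
  have hbC : ContDiff ℝ (∞ : WithTop ℕ∞) b := hb_smooth.of_le (by simp)
  have hvC : ContDiff ℝ (∞ : WithTop ℕ∞) v := hv.of_le (by simp)
  set hb : ℝ → ℝ := fun x => h0 - b x with hhb
  have hhbC : ContDiff ℝ (∞ : WithTop ℕ∞) hb := contDiff_const.sub hbC
  set db : ℝ → ℝ := fun x => deriv b x with hdb
  have hdbC : ContDiff ℝ (∞ : WithTop ℕ∞) db := (contDiff_infty_iff_deriv.mp hbC).2
  set α : ℝ → ℝ := fun x => 1 + (1/4) * (db x) ^ 2 with hα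
  have haC : ContDiff ℝ (∞ : WithTop ℕ∞) α :=
    contDiff_const.add (contDiff_const.mul (hdbC.pow 2))
  have hαpos : ∀ x, 0 < α x := fun x => by positivity
  have hαne : ∀ x, α x ≠ 0 := fun x => ne_of_gt (hαpos x)
  set G : ℝ → ℝ := fun x => deriv (fun y => hb y ^ 2 * v y) x with hG
  have hGC : ContDiff ℝ (∞ : WithTop ℕ∞) G :=
    (contDiff_infty_iff_deriv.mp ((hhbC.pow 2).mul hvC)).2
  set W : ℝ → ℝ := fun x =>
    ((1 / Real.sqrt 3) * G x + (Real.sqrt 3 / 2) * db x * hb x * v x) / α x with hW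
  have hWC : ContDiff ℝ (∞ : WithTop ℕ∞) W :=
    ((contDiff_const.mul hGC).add
      (((contDiff_const.mul hdbC).mul hhbC).mul hvC)).div haC hαne
  set w : ℝ → ℝ := fun y => (h0 - b y) / (1 + (1/4) * (deriv b y) ^ 2) * hbSstar v y with hw
  -- w = W wherever hb ≠ 0
  have hwW : ∀ x, hb x ≠ 0 → w x = W x := by
    intro x hx
    simp only [hw, hW, hG, hα, hdb, hhb, hhbSstar v x] at hx ⊢
    field_simp
  have key : ∀ p, 0 < hb p → p ∈ closure (Set.Ioo 0 ℓ) → hbSstar v p = 0 →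
      Real.sqrt 3 * deriv w p = -3 * (ftilde p - v p) := by
    intro p hp hpc hp0
    have hbcont : Continuous hb := hhbC.continuous
    -- eventual equality near points where hb > 0
    have hev : ∀ x, 0 < hb x → w =ᶠ[nhds x] W := by
      intro x hx
      have : ∀ᶠ y in nhds x, 0 < hb y :=
        Filter.eventually_of_mem ((isOpen_lt continuous_const hbcont).mem_nhds hx) fun y hy => hy
      exact this.mono fun y hy => hwW y (ne_of_gt hy)
    -- continuous auxiliary expression
    set Φ : ℝ → ℝ := fun x => v x + (1 / hb x) *
      (-(hb x ^ 2 / Real.sqrt 3) * ((deriv W x * hb x + W x * db x) / hb x ^ 2)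
        + (Real.sqrt 3 / 2) * db x * W x) with hΦ
    have hΦeq : ∀ x, 0 < hb x → v x + (1 / hb x) * hbS w x = Φ x := by
      intro x hx
      have hxne : hb x ≠ 0 := ne_of_gt hx
      have h1 : deriv (fun z => w z / hb z) x = deriv (fun z => W z / hb z) x := by
        apply Filter.EventuallyEq.deriv_eq
        exact (hev x hx).mono fun y hy => by simp only [hy]
      have h2 : deriv (fun z => W z / hb z) x
          = (deriv W x * hb x - W x * deriv hb x) / hb x ^ 2 :=
        deriv_div (hWC.differentiable (by simp) x) (hhbC.differentiable (by simp) x) hxne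
      have h3 : deriv hb x = -db x := by
        simp only [hhb, hdb]; exact deriv_const_sub h0
      simp only [hΦ, hhbS w x]
      rw [h1, h2, h3, hwW x hxne]
      simp only [hhb, hdb] at hxne ⊢
      field_simp
      ring
    have hΦcont : ContinuousAt Φ p := by
      have hpn : hb p ≠ 0 := ne_of_gt hp
      have hcW : Continuous W := hWC.continuous
      have hcdW : Continuous (deriv W) := hWC.continuous_deriv (by exact_mod_cast le_top)
      apply ContinuousAt.add (hvC.continuous.continuousAt)
      apply ContinuousAt.mul
      · exact ContinuousAt.div continuousAt_const hbcont.continuousAt hpn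
      apply ContinuousAt.add
      · apply ContinuousAt.mul
        · exact ((hbcont.pow 2).continuousAt.div continuousAt_const hs3').neg
        · refine ContinuousAt.div ?_ ((hbcont.pow 2).continuousAt) (by positivity)
          exact ((hcdW.continuousAt.mul hbcont.continuousAt).add
            (hcW.continuousAt.mul (hdbC.continuous.continuousAt)))
      · exact (continuousAt_const.mul (hdbC.continuous.continuousAt)).mul hcW.continuousAt
    -- Φ agrees with ftilde on the open interval
    have hΦf : ∀ x ∈ Set.Ioo 0 ℓ, Φ x = ftilde x := by
      intro x hx
      have hxpos : 0 < hb x := hb_pos x (Set.mem_Icc_of_Ioo hx)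
      rw [← hΦeq x hxpos]
      exact heq x hx
    -- take limits to get Φ p = ftilde p
    have hnb : (nhdsWithin p (Set.Ioo 0 ℓ)).NeBot := mem_closure_iff_nhdsWithin_neBot.mp hpc
    have ht1 : Filter.Tendsto Φ (nhdsWithin p (Set.Ioo 0 ℓ)) (nhds (Φ p)) :=
      hΦcont.continuousWithinAt
    have ht2 : Filter.Tendsto Φ (nhdsWithin p (Set.Ioo 0 ℓ)) (nhds (ftilde p)) := by
      refine Filter.Tendsto.congr' ?_ (hftilde.continuous.continuousAt.continuousWithinAt)
      exact eventually_mem_nhdsWithin.mono fun x hx => (hΦf x hx).symm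
    have hΦp : Φ p = ftilde p := tendsto_nhds_unique ht1 ht2
    -- compute Φ p using W p = 0
    have hWp : W p = 0 := by
      rw [← hwW p (ne_of_gt hp)]
      simp only [hw, hp0, mul_zero]
    have hdwp : deriv w p = deriv W p := (hev p hp).deriv_eq
    have hΦpval : Φ p = v p - deriv W p / Real.sqrt 3 := by
      have hpn : hb p ≠ 0 := ne_of_gt hp
      simp only [hΦ, hWp]
      field_simp
      ring
    rw [hdwp]
    rw [hΦpval] at hΦp
    have : ftilde p - v p = - (deriv W p / Real.sqrt 3) := by linarith
    rw [this]
    field_simp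
    linear_combination deriv W p * hs3sq
  constructor
  · exact key 0 (hb_pos 0 (Set.mem_Icc.mpr ⟨le_refl 0, le_of_lt hℓ⟩))
      (by rw [closure_Ioo (ne_of_lt hℓ)]; exact Set.mem_Icc.mpr ⟨le_refl 0, le_of_lt hℓ⟩) hbc0
  · exact key ℓ (hb_pos ℓ (Set.mem_Icc.mpr ⟨le_of_lt hℓ, le_refl ℓ⟩))
      (by rw [closure_Ioo (ne_of_lt hℓ)]; exact Set.mem_Icc.mpr ⟨le_of_lt hℓ, le_refl ℓ⟩) hbcl
end

section
/- Let h0, ℓ, g > 0 and let (ζ, q) : [0,∞) × [0,ℓ] → ℝ² be a smooth solution of the linearized Boussinesq system ∂_t ζ + ∂_x q = 0, (1 − (h0²/3)∂x²)∂_t q + g h0 ∂_x ζ = 0 on (0,ℓ), with boundary conditions ζ(t,0) = ζ(t,ℓ) = 0 for all t ≥ 0. Then the energy E(t) = (g/2)∫₀^ℓ ζ(t,x)² dx + (1/(2h0))∫₀^ℓ q(t,x)² dx + (h0/6)∫₀^ℓ (∂_x q(t,x))² dx is constant in time: E(t) = E(0) for all t ≥ 0. -/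
open Real MeasureTheory intervalIntegral



noncomputable def pd1 (f : ℝ → ℝ → ℝ) (t x : ℝ) : ℝ :=
  fderiv ℝ (Function.uncurry f) (t, x) (1, 0)

noncomputable def pd2 (f : ℝ → ℝ → ℝ) (t x : ℝ) : ℝ :=
  fderiv ℝ (Function.uncurry f) (t, x) (0, 1)

theorem hasDerivAt_pd1 {f : ℝ → ℝ → ℝ} (hf : ContDiff ℝ (⊤ : ℕ∞) (Function.uncurry f))
    (t x : ℝ) : HasDerivAt (fun s => f s x) (pd1 f t x) t := by
  have h1 : HasDerivAt (fun s : ℝ => (s, x)) ((1 : ℝ), (0 : ℝ)) t :=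
    (hasDerivAt_id t).prodMk (hasDerivAt_const t x)
  have h2 := (hf.differentiable (by simp) (t, x)).hasFDerivAt
  exact h2.comp_hasDerivAt t h1

theorem hasDerivAt_pd2 {f : ℝ → ℝ → ℝ} (hf : ContDiff ℝ (⊤ : ℕ∞) (Function.uncurry f))
    (t x : ℝ) : HasDerivAt (fun y => f t y) (pd2 f t x) x := by
  have h1 : HasDerivAt (fun y : ℝ => (t, y)) ((0 : ℝ), (1 : ℝ)) x :=
    (hasDerivAt_const x t).prodMk (hasDerivAt_id x)
  have h2 := (hf.differentiable (by simp) (t, x)).hasFDerivAt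
  exact h2.comp_hasDerivAt x h1

theorem deriv_pd1 {f : ℝ → ℝ → ℝ} (hf : ContDiff ℝ (⊤ : ℕ∞) (Function.uncurry f))
    (t x : ℝ) : deriv (fun s => f s x) t = pd1 f t x := (hasDerivAt_pd1 hf t x).deriv

theorem deriv_pd2 {f : ℝ → ℝ → ℝ} (hf : ContDiff ℝ (⊤ : ℕ∞) (Function.uncurry f))
    (t x : ℝ) : deriv (fun y => f t y) x = pd2 f t x := (hasDerivAt_pd2 hf t x).deriv

theorem contDiff_pd1 {f : ℝ → ℝ → ℝ} (hf : ContDiff ℝ (⊤ : ℕ∞) (Function.uncurry f)) :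
    ContDiff ℝ (⊤ : ℕ∞) (Function.uncurry (pd1 f)) := by
  have h := (hf.fderiv_right (m := (⊤ : ℕ∞)) le_rfl).clm_apply
    (contDiff_const (c := ((1 : ℝ), (0 : ℝ))))
  exact h

theorem contDiff_pd2 {f : ℝ → ℝ → ℝ} (hf : ContDiff ℝ (⊤ : ℕ∞) (Function.uncurry f)) :
    ContDiff ℝ (⊤ : ℕ∞) (Function.uncurry (pd2 f)) := by
  have h := (hf.fderiv_right (m := (⊤ : ℕ∞)) le_rfl).clm_apply
    (contDiff_const (c := ((0 : ℝ), (1 : ℝ))))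
  exact h

theorem pd_swap {f : ℝ → ℝ → ℝ} (hf : ContDiff ℝ (⊤ : ℕ∞) (Function.uncurry f))
    (t x : ℝ) : pd1 (pd2 f) t x = pd2 (pd1 f) t x := by
  have hsymm : IsSymmSndFDerivAt ℝ (Function.uncurry f) (t, x) :=
    (hf.contDiffAt).isSymmSndFDerivAt (by norm_num; exact WithTop.coe_le_coe.2 le_top)
  have hd : DifferentiableAt ℝ (fderiv ℝ (Function.uncurry f)) (t, x) :=
    ((hf.fderiv_right (m := (⊤ : ℕ∞)) le_rfl).differentiable (by simp)) (t, x)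
  have e1 : pd1 (pd2 f) t x = fderiv ℝ (fderiv ℝ (Function.uncurry f)) (t, x) (1, 0) (0, 1) := by
    have : Function.uncurry (pd2 f) = fun p => fderiv ℝ (Function.uncurry f) p ((0 : ℝ), (1 : ℝ)) := rfl
    rw [pd1, this, fderiv_clm_apply hd (differentiableAt_const _)]
    simp
  have e2 : pd2 (pd1 f) t x = fderiv ℝ (fderiv ℝ (Function.uncurry f)) (t, x) (0, 1) (1, 0) := by
    have : Function.uncurry (pd1 f) = fun p => fderiv ℝ (Function.uncurry f) p ((1 : ℝ), (0 : ℝ)) := rfl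
    rw [pd2, this, fderiv_clm_apply hd (differentiableAt_const _)]
    simp
  rw [e1, e2, hsymm]

-- continuous function vanishing on Ioi 0 vanishes on Ici 0
theorem zero_on_Ici {u : ℝ → ℝ} (hu : Continuous u) (h : ∀ s > (0:ℝ), u s = 0) :
    ∀ s ≥ (0:ℝ), u s = 0 := by
  have heq : Set.EqOn u (fun _ => (0:ℝ)) (closure (Set.Ioi (0:ℝ))) :=
    Set.EqOn.closure (fun s hs => h s hs) hu continuous_const
  intro s hs
  exact heq (by rwa [closure_Ioi])

-- eqOn Ioo extends to Icc
theorem eqOn_Icc_of_Ioo {u v : ℝ → ℝ} {a b : ℝ} (hab : a < b)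
    (hu : Continuous u) (hv : Continuous v)
    (h : ∀ x ∈ Set.Ioo a b, u x = v x) : ∀ x ∈ Set.Icc a b, u x = v x := by
  have heq : Set.EqOn u v (closure (Set.Ioo a b)) :=
    Set.EqOn.closure (fun x hx => h x hx) hu hv
  intro x hx
  exact heq (by rwa [closure_Ioo hab.ne])

-- Fubini for interval integrals of continuous functions
theorem interval_swap {K : ℝ → ℝ → ℝ} (hK : Continuous (Function.uncurry K))
    {t ℓ : ℝ} (ht : 0 ≤ t) (hℓ : 0 ≤ ℓ) :
    ∫ x in (0:ℝ)..ℓ, ∫ s in (0:ℝ)..t, K s x = ∫ s in (0:ℝ)..t, ∫ x in (0:ℝ)..ℓ, K s x := by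
  rw [intervalIntegral.integral_of_le hℓ, intervalIntegral.integral_of_le ht]
  simp_rw [intervalIntegral.integral_of_le ht, intervalIntegral.integral_of_le hℓ]
  apply MeasureTheory.integral_integral_swap
  have hcont : Continuous (Function.uncurry fun x s => K s x) := by
    exact hK.comp (continuous_snd.prodMk continuous_fst)
  rw [Measure.prod_restrict]
  exact (hcont.continuousOn.integrableOn_compact (isCompact_Icc.prod isCompact_Icc)).mono_set
    (Set.prod_mono Set.Ioc_subset_Icc_self Set.Ioc_subset_Icc_self)

theorem contSlice2 {f : ℝ → ℝ → ℝ} (hf : Continuous (Function.uncurry f)) (t : ℝ) :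
    Continuous fun x => f t x := hf.comp (continuous_const.prodMk continuous_id)

theorem contSlice1 {f : ℝ → ℝ → ℝ} (hf : Continuous (Function.uncurry f)) (x : ℝ) :
    Continuous fun t => f t x := hf.comp (continuous_id.prodMk continuous_const)

noncomputable def bqGt (h0 g : ℝ) (ζ q : ℝ → ℝ → ℝ) (s x : ℝ) : ℝ :=
  g * (ζ s x * pd1 ζ s x) + 1 / h0 * (q s x * pd1 q s x)
    + h0 / 3 * (pd2 q s x * pd1 (pd2 q) s x)

noncomputable def bqH (h0 g : ℝ) (ζ q : ℝ → ℝ → ℝ) (s x : ℝ) : ℝ :=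
  -(g * (ζ s x * q s x)) + h0 / 3 * (q s x * pd2 (pd1 q) s x)

theorem bqGt_continuous {h0 g : ℝ} {ζ q : ℝ → ℝ → ℝ}
    (hζ : ContDiff ℝ (⊤ : ℕ∞) (Function.uncurry ζ)) (hq : ContDiff ℝ (⊤ : ℕ∞) (Function.uncurry q)) :
    Continuous (Function.uncurry (bqGt h0 g ζ q)) := by
  have c1 : Continuous fun p : ℝ × ℝ => ζ p.1 p.2 := hζ.continuous
  have c2 : Continuous fun p : ℝ × ℝ => q p.1 p.2 := hq.continuous
  have c3 : Continuous fun p : ℝ × ℝ => pd1 ζ p.1 p.2 := (contDiff_pd1 hζ).continuous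
  have c4 : Continuous fun p : ℝ × ℝ => pd1 q p.1 p.2 := (contDiff_pd1 hq).continuous
  have c5 : Continuous fun p : ℝ × ℝ => pd2 q p.1 p.2 := (contDiff_pd2 hq).continuous
  have c6 : Continuous fun p : ℝ × ℝ => pd1 (pd2 q) p.1 p.2 :=
    (contDiff_pd1 (contDiff_pd2 hq)).continuous
  exact ((continuous_const.mul (c1.mul c3)).add
    (continuous_const.mul (c2.mul c4))).add (continuous_const.mul (c5.mul c6))

theorem linearized_boussinesq_energy_conservation
    (h0 ℓ g : ℝ) (hh0 : 0 < h0) (hℓ : 0 < ℓ) (hg : 0 < g)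
    (ζ q : ℝ → ℝ → ℝ)
    (hζ : ContDiff ℝ (⊤ : ℕ∞) (Function.uncurry ζ)) (hq : ContDiff ℝ (⊤ : ℕ∞) (Function.uncurry q))
    (heq1 : ∀ t ≥ (0:ℝ), ∀ x ∈ Set.Ioo 0 ℓ,
      deriv (fun s => ζ s x) t + deriv (fun y => q t y) x = 0)
    (heq2 : ∀ t ≥ (0:ℝ), ∀ x ∈ Set.Ioo 0 ℓ,
      deriv (fun s => q s x) t
        - (h0 ^ 2 / 3) * deriv (deriv (fun y => deriv (fun s => q s y) t)) x
        + g * h0 * deriv (fun y => ζ t y) x = 0)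
    (hbc : ∀ t ≥ (0:ℝ), ζ t 0 = 0 ∧ ζ t ℓ = 0) :
    ∀ t ≥ (0:ℝ),
      (g / 2) * (∫ x in (0:ℝ)..ℓ, (ζ t x) ^ 2)
        + (1 / (2 * h0)) * (∫ x in (0:ℝ)..ℓ, (q t x) ^ 2)
        + (h0 / 6) * (∫ x in (0:ℝ)..ℓ, (deriv (fun y => q t y) x) ^ 2)
      = (g / 2) * (∫ x in (0:ℝ)..ℓ, (ζ 0 x) ^ 2)
        + (1 / (2 * h0)) * (∫ x in (0:ℝ)..ℓ, (q 0 x) ^ 2)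
        + (h0 / 6) * (∫ x in (0:ℝ)..ℓ, (deriv (fun y => q 0 y) x) ^ 2) := by
  intro t ht
  -- rewrite the spatial derivative of q via pd2
  have hder : ∀ τ x : ℝ, deriv (fun y => q τ y) x = pd2 q τ x := fun τ x => deriv_pd2 hq τ x
  simp only [hder]
  -- rewritten versions of the PDEs
  have heq1' : ∀ s ≥ (0:ℝ), ∀ x ∈ Set.Ioo 0 ℓ, pd1 ζ s x + pd2 q s x = 0 := by
    intro s hs x hx
    have := heq1 s hs x hx
    rwa [deriv_pd1 hζ, deriv_pd2 hq] at this
  have heq2' : ∀ s ≥ (0:ℝ), ∀ x ∈ Set.Ioo 0 ℓ,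
      pd1 q s x - h0 ^ 2 / 3 * pd2 (pd2 (pd1 q)) s x + g * h0 * pd2 ζ s x = 0 := by
    intro s hs x hx
    have h := heq2 s hs x hx
    have e1 : (fun y => deriv (fun s' => q s' y) s) = fun y => pd1 q s y :=
      funext fun y => deriv_pd1 hq s y
    rw [e1] at h
    have e2 : deriv (fun y => pd1 q s y) = fun y => pd2 (pd1 q) s y :=
      funext fun y => deriv_pd2 (contDiff_pd1 hq) s y
    rw [e2] at h
    rwa [deriv_pd1 hq, deriv_pd2 (contDiff_pd2 (contDiff_pd1 hq)), deriv_pd2 hζ] at h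
  -- boundary vanishing facts
  have hζt0 : ∀ b ∈ ({0, ℓ} : Set ℝ), ∀ s ≥ (0:ℝ), pd1 ζ s b = 0 := by
    intro b hb
    apply zero_on_Ici (contSlice1 (contDiff_pd1 hζ).continuous b)
    intro s hs
    have hev : (fun s' => ζ s' b) =ᶠ[nhds s] fun _ => (0:ℝ) := by
      filter_upwards [Ioi_mem_nhds hs] with r hr
      rcases hb with rfl | hb
      · exact (hbc r (le_of_lt hr)).1
      · rcases hb with rfl
        exact (hbc r (le_of_lt hr)).2
    rw [← deriv_pd1 hζ, hev.deriv_eq, deriv_const]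
  have hqx0 : ∀ b ∈ ({0, ℓ} : Set ℝ), ∀ s ≥ (0:ℝ), pd2 q s b = 0 := by
    intro b hb s hs
    have hIcc : ∀ x ∈ Set.Icc (0:ℝ) ℓ, pd2 q s x = -pd1 ζ s x := by
      apply eqOn_Icc_of_Ioo hℓ (contSlice2 (contDiff_pd2 hq).continuous s)
        (contSlice2 (contDiff_pd1 hζ).continuous s).neg
      intro x hx
      have := heq1' s hs x hx
      simp only [Pi.neg_apply]
      linarith
    have hbIcc : b ∈ Set.Icc (0:ℝ) ℓ := by
      rcases hb with rfl | hb
      · exact Set.left_mem_Icc.2 hℓ.le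
      · rcases hb with rfl
        exact Set.right_mem_Icc.2 hℓ.le
    rw [hIcc b hbIcc, hζt0 b hb s hs, neg_zero]
  have hqxt0 : ∀ b ∈ ({0, ℓ} : Set ℝ), ∀ s ≥ (0:ℝ), pd2 (pd1 q) s b = 0 := by
    intro b hb s hs
    rw [← pd_swap hq]
    refine zero_on_Ici (contSlice1 (contDiff_pd1 (contDiff_pd2 hq)).continuous b) ?_ s hs
    intro r hr
    have hev : (fun s' => pd2 q s' b) =ᶠ[nhds r] fun _ => (0:ℝ) := by
      filter_upwards [Ioi_mem_nhds hr] with r' hr'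
      exact hqx0 b hb r' (le_of_lt hr')
    rw [← deriv_pd1 (contDiff_pd2 hq), hev.deriv_eq, deriv_const]
  -- continuity facts
  have hGtc := bqGt_continuous (h0 := h0) (g := g) hζ hq
  have hiζ : ∀ τ : ℝ, IntervalIntegrable (fun x => g / 2 * ζ τ x ^ 2) volume 0 ℓ :=
    fun τ => (continuous_const.mul ((contSlice2 hζ.continuous τ).pow 2)).intervalIntegrable _ _
  have hiq : ∀ τ : ℝ, IntervalIntegrable (fun x => 1 / (2 * h0) * q τ x ^ 2) volume 0 ℓ :=
    fun τ => (continuous_const.mul ((contSlice2 hq.continuous τ).pow 2)).intervalIntegrable _ _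
  have hiqx : ∀ τ : ℝ, IntervalIntegrable (fun x => h0 / 6 * pd2 q τ x ^ 2) volume 0 ℓ :=
    fun τ => (continuous_const.mul
      ((contSlice2 (contDiff_pd2 hq).continuous τ).pow 2)).intervalIntegrable _ _
  have hiG : ∀ τ : ℝ, IntervalIntegrable
      (fun x => g / 2 * ζ τ x ^ 2 + 1 / (2 * h0) * q τ x ^ 2 + h0 / 6 * pd2 q τ x ^ 2)
      volume 0 ℓ := fun τ => ((hiζ τ).add (hiq τ)).add (hiqx τ)
  -- Step 1 : combine the three integrals
  have hsplit : ∀ τ : ℝ,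
      g / 2 * (∫ x in (0:ℝ)..ℓ, ζ τ x ^ 2) + 1 / (2 * h0) * (∫ x in (0:ℝ)..ℓ, q τ x ^ 2)
        + h0 / 6 * (∫ x in (0:ℝ)..ℓ, pd2 q τ x ^ 2)
      = ∫ x in (0:ℝ)..ℓ,
          (g / 2 * ζ τ x ^ 2 + 1 / (2 * h0) * q τ x ^ 2 + h0 / 6 * pd2 q τ x ^ 2) := by
    intro τ
    rw [← intervalIntegral.integral_const_mul, ← intervalIntegral.integral_const_mul,
      ← intervalIntegral.integral_const_mul,
      ← intervalIntegral.integral_add (hiζ τ) (hiq τ),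
      ← intervalIntegral.integral_add ((hiζ τ).add (hiq τ)) (hiqx τ)]
  -- Step 2 : time FTC pointwise in x
  have hGt : ∀ (s x : ℝ), HasDerivAt
      (fun τ => g / 2 * ζ τ x ^ 2 + 1 / (2 * h0) * q τ x ^ 2 + h0 / 6 * pd2 q τ x ^ 2)
      (bqGt h0 g ζ q s x) s := by
    intro s x
    have h1 := hasDerivAt_pd1 hζ s x
    have h2 := hasDerivAt_pd1 hq s x
    have h3 := hasDerivAt_pd1 (contDiff_pd2 hq) s x
    have key := (((h1.pow 2).const_mul (g / 2)).add ((h2.pow 2).const_mul (1 / (2 * h0)))).add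
      ((h3.pow 2).const_mul (h0 / 6))
    refine key.congr_deriv ?_
    unfold bqGt
    field_simp
    ring
  have hstep2 : ∀ x : ℝ,
      (g / 2 * ζ t x ^ 2 + 1 / (2 * h0) * q t x ^ 2 + h0 / 6 * pd2 q t x ^ 2)
        - (g / 2 * ζ 0 x ^ 2 + 1 / (2 * h0) * q 0 x ^ 2 + h0 / 6 * pd2 q 0 x ^ 2)
      = ∫ s in (0:ℝ)..t, bqGt h0 g ζ q s x := by
    intro x
    rw [intervalIntegral.integral_eq_sub_of_hasDerivAt (fun s _ => hGt s x)
      ((contSlice1 hGtc x).intervalIntegrable _ _)]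
  -- Step 4 : spatial integral of the flux divergence vanishes for s ≥ 0
  have hzero : ∀ s ≥ (0:ℝ), (∫ x in (0:ℝ)..ℓ, bqGt h0 g ζ q s x) = 0 := by
    intro s hs
    have hHc : ContinuousOn (fun x => bqH h0 g ζ q s x) (Set.Icc 0 ℓ) := by
      apply Continuous.continuousOn
      simp only [bqH]
      exact ((continuous_const.mul ((contSlice2 hζ.continuous s).mul
        (contSlice2 hq.continuous s))).neg).add (continuous_const.mul
        ((contSlice2 hq.continuous s).mul
          (contSlice2 (contDiff_pd2 (contDiff_pd1 hq)).continuous s)))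
    have hHd : ∀ x ∈ Set.Ioo (0:ℝ) ℓ,
        HasDerivAt (fun x => bqH h0 g ζ q s x) (bqGt h0 g ζ q s x) x := by
      intro x hx
      simp only [bqH, bqGt]
      have hA := hasDerivAt_pd2 hζ s x
      have hB := hasDerivAt_pd2 hq s x
      have hC := hasDerivAt_pd2 (contDiff_pd2 (contDiff_pd1 hq)) s x
      have key := (((hA.mul hB).const_mul g).neg).add
        ((hB.mul hC).const_mul (h0 / 3))
      refine key.congr_deriv ?_
      have e1 : pd1 ζ s x = -pd2 q s x := by have := heq1' s hs x hx; linarith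
      have e2 : pd1 q s x = h0 ^ 2 / 3 * pd2 (pd2 (pd1 q)) s x - g * h0 * pd2 ζ s x := by
        have := heq2' s hs x hx; linarith
      rw [e1, e2, pd_swap hq]
      field_simp
      ring
    have hiGt : IntervalIntegrable (fun x => bqGt h0 g ζ q s x) volume 0 ℓ :=
      (contSlice2 hGtc s).intervalIntegrable _ _
    rw [intervalIntegral.integral_eq_sub_of_hasDerivAt_of_le hℓ.le hHc hHd hiGt]
    have hb0 : bqH h0 g ζ q s 0 = 0 := by
      unfold bqH
      rw [(hbc s hs).1, hqxt0 0 (by simp) s hs]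
      ring
    have hbℓ : bqH h0 g ζ q s ℓ = 0 := by
      unfold bqH
      rw [(hbc s hs).2, hqxt0 ℓ (by simp) s hs]
      ring
    rw [hb0, hbℓ, sub_zero]
  -- assemble
  have key :
      (g / 2 * (∫ x in (0:ℝ)..ℓ, ζ t x ^ 2) + 1 / (2 * h0) * (∫ x in (0:ℝ)..ℓ, q t x ^ 2)
        + h0 / 6 * (∫ x in (0:ℝ)..ℓ, pd2 q t x ^ 2))
      - (g / 2 * (∫ x in (0:ℝ)..ℓ, ζ 0 x ^ 2) + 1 / (2 * h0) * (∫ x in (0:ℝ)..ℓ, q 0 x ^ 2)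
        + h0 / 6 * (∫ x in (0:ℝ)..ℓ, pd2 q 0 x ^ 2)) = 0 := by
    rw [hsplit t, hsplit 0, ← intervalIntegral.integral_sub (hiG t) (hiG 0)]
    calc
      ∫ x in (0:ℝ)..ℓ,
          ((g / 2 * ζ t x ^ 2 + 1 / (2 * h0) * q t x ^ 2 + h0 / 6 * pd2 q t x ^ 2)
            - (g / 2 * ζ 0 x ^ 2 + 1 / (2 * h0) * q 0 x ^ 2 + h0 / 6 * pd2 q 0 x ^ 2))
        = ∫ x in (0:ℝ)..ℓ, ∫ s in (0:ℝ)..t, bqGt h0 g ζ q s x :=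
          intervalIntegral.integral_congr (fun x _ => hstep2 x)
      _ = ∫ s in (0:ℝ)..t, ∫ x in (0:ℝ)..ℓ, bqGt h0 g ζ q s x := interval_swap hGtc ht hℓ.le
      _ = ∫ s in (0:ℝ)..t, (0:ℝ) := by
          apply intervalIntegral.integral_congr
          intro s hs
          rw [Set.uIcc_of_le ht] at hs
          exact hzero s hs.1
      _ = 0 := by simp
  linarith
end

section
/- Let h0, g, c > 0 and let ζ̃ : ℝ → ℝ be a smooth solution of the solitary-wave profile equation −c² h0 ζ̃/(h0 + ζ̃) + (c²h0²/3) ζ̃'' + (g/2)(ζ̃² + 2h0 ζ̃) = 0 with h0 + ζ̃ > 0 everywhere. Suppose ζ̃(x) → 0, ζ̃'(x) → 0, ζ̃''(x) → 0 as x → +∞, ζ̃'(0) = 0 and ζ̃(0) = ζ_max with ζ_max > 0. Then c² satisfies c² = (g ζ_max³/6 + g h0 ζ_max²/2) / (h0²(ζ_max/h0 − log(1 + ζ_max/h0))). -/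
open Real Filter

theorem solitary_wave_celerity_relation
    (h0 g c ζmax : ℝ) (hh0 : 0 < h0) (hg : 0 < g) (hc : 0 < c) (hζmax : 0 < ζmax)
    (ζ : ℝ → ℝ) (hζ : ContDiff ℝ (⊤ : ℕ∞) ζ)
    (hpos : ∀ x, 0 < h0 + ζ x)
    (hode : ∀ x, -c ^ 2 * h0 * ζ x / (h0 + ζ x)
      + (c ^ 2 * h0 ^ 2 / 3) * deriv (deriv ζ) x
      + (g / 2) * ((ζ x) ^ 2 + 2 * h0 * ζ x) = 0)
    (hdecay0 : Tendsto ζ atTop (nhds 0))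
    (hdecay1 : Tendsto (deriv ζ) atTop (nhds 0))
    (hdecay2 : Tendsto (deriv (deriv ζ)) atTop (nhds 0))
    (hcrest : deriv ζ 0 = 0) (hmax : ζ 0 = ζmax) :
    c ^ 2 = (g * ζmax ^ 3 / 6 + g * h0 * ζmax ^ 2 / 2) /
      (h0 ^ 2 * (ζmax / h0 - Real.log (1 + ζmax / h0))) := by
  have hζd : Differentiable ℝ ζ := hζ.differentiable (by simp)
  have hzinf : ContDiff ℝ ((⊤ : ℕ∞) : WithTop ℕ∞) ζ := hζ.of_le (by simp)
  have hζ'd : Differentiable ℝ (deriv ζ) :=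
    ((contDiff_infty_iff_deriv.mp hzinf).2).differentiable (by simp)
  set F : ℝ → ℝ := fun x => -c ^ 2 * h0 * ζ x + c ^ 2 * h0 ^ 2 * Real.log (h0 + ζ x)
      + (c ^ 2 * h0 ^ 2 / 6) * (deriv ζ x) ^ 2 + (g / 6) * (ζ x) ^ 3
      + (g * h0 / 2) * (ζ x) ^ 2 with hFdef
  have hF : ∀ x, HasDerivAt F 0 x := by
    intro x
    have hne : h0 + ζ x ≠ 0 := (hpos x).ne'
    have h1 : HasDerivAt ζ (deriv ζ x) x := (hζd x).hasDerivAt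
    have h2 : HasDerivAt (deriv ζ) (deriv (deriv ζ) x) x := (hζ'd x).hasDerivAt
    have hlog : HasDerivAt (fun y => Real.log (h0 + ζ y)) (deriv ζ x / (h0 + ζ x)) x := by
      simpa using (HasDerivAt.const_add h0 h1).log hne
    have H : HasDerivAt F
        (-c ^ 2 * h0 * deriv ζ x + c ^ 2 * h0 ^ 2 * (deriv ζ x / (h0 + ζ x))
          + (c ^ 2 * h0 ^ 2 / 6) * (2 * deriv ζ x ^ 1 * deriv (deriv ζ) x)
          + (g / 6) * (3 * ζ x ^ 2 * deriv ζ x)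
          + (g * h0 / 2) * (2 * ζ x ^ 1 * deriv ζ x)) x := by
      exact (((((h1.const_mul (-c ^ 2 * h0)).add (hlog.const_mul (c ^ 2 * h0 ^ 2))).add
        ((h2.pow 2).const_mul (c ^ 2 * h0 ^ 2 / 6))).add
        ((h1.pow 3).const_mul (g / 6))).add ((h1.pow 2).const_mul (g * h0 / 2)))
    have key : (-c ^ 2 * h0 * deriv ζ x + c ^ 2 * h0 ^ 2 * (deriv ζ x / (h0 + ζ x))
          + (c ^ 2 * h0 ^ 2 / 6) * (2 * deriv ζ x ^ 1 * deriv (deriv ζ) x)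
          + (g / 6) * (3 * ζ x ^ 2 * deriv ζ x)
          + (g * h0 / 2) * (2 * ζ x ^ 1 * deriv ζ x))
        = deriv ζ x * (-c ^ 2 * h0 * ζ x / (h0 + ζ x)
          + (c ^ 2 * h0 ^ 2 / 3) * deriv (deriv ζ) x
          + (g / 2) * ((ζ x) ^ 2 + 2 * h0 * ζ x)) := by
      field_simp
      ring
    rw [key, hode x, mul_zero] at H
    exact H
  have hFconst : ∀ x, F x = F 0 :=
    fun x => is_const_of_deriv_eq_zero (fun y => (hF y).differentiableAt)
      (fun y => (hF y).deriv) x 0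
  have hlim1 : Tendsto F atTop (nhds (F 0)) := by
    have : F = fun _ => F 0 := funext hFconst
    rw [this]; exact tendsto_const_nhds
  have hlim2 : Tendsto F atTop (nhds (c ^ 2 * h0 ^ 2 * Real.log h0)) := by
    have hlog : Tendsto (fun x => Real.log (h0 + ζ x)) atTop (nhds (Real.log h0)) := by
      have : Tendsto (fun x => h0 + ζ x) atTop (nhds (h0 + 0)) :=
        tendsto_const_nhds.add hdecay0
      rw [add_zero] at this
      exact ((Real.continuousAt_log hh0.ne').tendsto).comp this
    have := ((((hdecay0.const_mul (-c ^ 2 * h0)).add (hlog.const_mul (c ^ 2 * h0 ^ 2))).add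
      (((hdecay1.pow 2)).const_mul (c ^ 2 * h0 ^ 2 / 6))).add
      ((hdecay0.pow 3).const_mul (g / 6))).add ((hdecay0.pow 2).const_mul (g * h0 / 2))
    have h2' : Tendsto F atTop (nhds (-c ^ 2 * h0 * (0:ℝ) + c ^ 2 * h0 ^ 2 * Real.log h0
        + (c ^ 2 * h0 ^ 2 / 6) * (0:ℝ) ^ 2 + (g / 6) * (0:ℝ) ^ 3 + (g * h0 / 2) * (0:ℝ) ^ 2)) := this
    norm_num at h2'
    exact h2'
  have hF0 : F 0 = c ^ 2 * h0 ^ 2 * Real.log h0 := tendsto_nhds_unique hlim1 hlim2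
  rw [hFdef] at hF0
  simp only [hcrest, hmax] at hF0
  have hlog1 : Real.log (1 + ζmax / h0) = Real.log (h0 + ζmax) - Real.log h0 := by
    have : 1 + ζmax / h0 = (h0 + ζmax) / h0 := by field_simp
    rw [this, Real.log_div (by positivity) hh0.ne']
  have hden : 0 < h0 ^ 2 * (ζmax / h0 - Real.log (1 + ζmax / h0)) := by
    have h1 : Real.log (1 + ζmax / h0) < ζmax / h0 := by
      have := Real.log_lt_sub_one_of_pos (x := 1 + ζmax / h0) (by positivity)
        (by intro h; nlinarith [div_pos hζmax hh0])
      linarith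
    have : 0 < ζmax / h0 - Real.log (1 + ζmax / h0) := by linarith
    positivity
  rw [eq_div_iff hden.ne', hlog1]
  have hsimp : h0 ^ 2 * (ζmax / h0) = h0 * ζmax := by field_simp
  linear_combination c ^ 2 * hsimp - hF0
end
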